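/- arXiv:0808.3439 — 2 statements merged into one kernel-verified Lean document; each statement's English description precedes it below -/
import Mathlib

section
/- The color map c, which sends a rooted tree on X = {x_1 < ... < x_n} to the two-colored tree obtained by coloring each increasing edge red and each decreasing edge blue, is a bijection from ℛ_n onto 𝒢̄_n; consequently the cardinality of 𝒢̄_n is n^{n-1}. -/
/-
Formalization of definitions and a statement from:
"Combinatorial bases for multilinear parts of free algebras with double compatible brackets"
(Fu Liu).  The alphabet X = {x_1 < ... < x_n} is identified with Fin n.
-/

noncomputable section
namespace LiuPaper

attribute [local instance] Classical.propDecidable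

/-- The two colors used throughout: red and blue. -/
inductive Col : Type
  | red | blue
  deriving DecidableEq

/-! ### Two-colored graphs on `Fin n` -/

/-- A two-colored graph on the vertex set `Fin n`: each unordered pair of vertices either
carries no edge (`none`) or an edge colored red or blue. -/
abbrev TCGraph (n : ℕ) : Type := Sym2 (Fin n) → Option Col

/-- No loops: the diagonal pairs carry no edge. -/
def Loopless {n : ℕ} (G : TCGraph n) : Prop := ∀ v : Fin n, G (Sym2.diag v) = none

/-- The underlying (uncolored) simple graph of a two-colored graph. -/
def toSG {n : ℕ} (G : TCGraph n) : SimpleGraph (Fin n) where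
  Adj i j := i ≠ j ∧ G s(i, j) ≠ none
  symm := ⟨by
    intro i j hij
    refine ⟨hij.1.symm, ?_⟩
    rw [Sym2.eq_swap]
    exact hij.2⟩
  loopless := ⟨fun v hv => hv.1 rfl⟩

/-- Pattern `1r3r2`: there are `i < j < k` with `{i,k}` and `{j,k}` both red. -/
def Pat1r3r2 {n : ℕ} (G : TCGraph n) : Prop :=
  ∃ i j k : Fin n, i < j ∧ j < k ∧ G s(i, k) = some Col.red ∧ G s(j, k) = some Col.red

/-- Pattern `2b1b3`: there are `i < j < k` with `{i,j}` and `{i,k}` both blue. -/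
def Pat2b1b3 {n : ℕ} (G : TCGraph n) : Prop :=
  ∃ i j k : Fin n, i < j ∧ j < k ∧ G s(i, j) = some Col.blue ∧ G s(i, k) = some Col.blue

/-- Pattern `1r2b3`: there are `i < j < k` with `{i,j}` red and `{j,k}` blue. -/
def Pat1r2b3 {n : ℕ} (G : TCGraph n) : Prop :=
  ∃ i j k : Fin n, i < j ∧ j < k ∧ G s(i, j) = some Col.red ∧ G s(j, k) = some Col.blue

/-- `𝒢̄_n`: the set of two-colored trees on `X` avoiding the patterns
`1r3r2`, `2b1b3` and `1r2b3`. -/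
def Gbar (n : ℕ) : Set (TCGraph n) :=
  {G | Loopless G ∧ (toSG G).IsTree ∧ ¬Pat1r3r2 G ∧ ¬Pat2b1b3 G ∧ ¬Pat1r2b3 G}

/-! ### Rooted trees on `Fin n` -/

/-- A rooted tree on `X = Fin n`: a tree together with a distinguished root. -/
structure RootedTree (n : ℕ) where
  graph : SimpleGraph (Fin n)
  isTree : graph.IsTree
  root : Fin n

/-- `i` is the parent of `j` in the rooted tree `T`:
they are adjacent and `i` is closer to the root. -/
def ParentOf {n : ℕ} (T : RootedTree n) (i j : Fin n) : Prop :=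
  T.graph.Adj i j ∧ T.graph.dist T.root i + 1 = T.graph.dist T.root j

/-- The color map `c`: color the increasing edges (parent < child) of a rooted tree red and
the decreasing edges blue. -/
def colorMap {n : ℕ} (T : RootedTree n) : TCGraph n :=
  Sym2.lift ⟨fun i j =>
    if T.graph.Adj i j then
      (if (ParentOf T i j ∧ i < j) ∨ (ParentOf T j i ∧ j < i) then some Col.red
       else some Col.blue)
    else none,
    by
      intro i j
      dsimp only
      by_cases h : T.graph.Adj i j
      · rw [if_pos h, if_pos h.symm]
        by_cases h2 : (ParentOf T i j ∧ i < j) ∨ (ParentOf T j i ∧ j < i)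
        · rw [if_pos h2, if_pos (Or.symm h2)]
        · rw [if_neg h2, if_neg (fun h2' => h2 (Or.symm h2'))]
      · rw [if_neg h, if_neg (fun h' => h (h'.symm))]⟩

/-- The number of increasing edges (counted as ordered pairs (parent, child) with
parent < child) of a rooted tree. -/
def incCount {n : ℕ} (T : RootedTree n) : ℕ :=
  (Finset.univ.filter (fun p : Fin n × Fin n => ParentOf T p.1 p.2 ∧ p.1 < p.2)).card

/-- `a(n,i)`: the number of rooted trees on `{1, …, n}` with exactly `i` increasing edges. -/
def numRT (n i : ℕ) : ℕ := Nat.card {T : RootedTree n // incCount T = i}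


/-!
Call `u` a colour-parent of `v` when `{u, v}` is red with `u < v` or blue with `v < u`. In `c(T)`
the colour-parents are exactly the parents of `T`, and a loopless coloured graph is determined by
its colour-parents; this gives injectivity. The three forbidden patterns are precisely the three
ways for a vertex to have two colour-parents, so `c(T) ∈ 𝒢̄_n`. Conversely, a tree in `𝒢̄_n` has a
vertex `r` without colour-parent (there are fewer edges than vertices), and by induction on the
distance to `r` the colour-parents are the parents of the tree rooted at `r`.

For the count, a rooted tree is the same as its parent map, and Joyal's bijection identifies
self-maps `f` of `X` with rooted trees carrying a marked vertex: if `c₁ < ⋯ < c_k` are the periodic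
points of `f`, replace `f` on them by the path `f c₁ → f c₂ → ⋯ → f c_k`, whose end is the root and
whose start is the marked vertex. Hence `n · |ℛ_n| = n ^ n`.
-/

end LiuPaper

namespace SimpleGraph
variable {V : Type*} {G : SimpleGraph V}

lemma IsTree.exists_adj_dist_add_one (hG : G.IsTree) {w v : V} (hv : v ≠ w) :
    ∃ p, G.Adj p v ∧ G.dist w p + 1 = G.dist w v := by
  obtain ⟨q, hq⟩ := hG.connected.exists_walk_length_eq_dist w v
  have hadj := Walk.adj_penultimate (p := q) (Walk.not_nil_of_ne hv.symm)
  refine ⟨_, hadj, ?_⟩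
  have := dist_le q.dropLast
  rw [Walk.length_dropLast] at this
  rcases hG.dist_eq_dist_add_one_of_adj w hadj with h | h <;> omega

lemma IsTree.eq_of_adj_of_dist_add_one (hG : G.IsTree) {w p p' v : V} (hp : G.Adj p v)
    (hp' : G.Adj p' v) (hd : G.dist w p + 1 = G.dist w v) (hd' : G.dist w p' + 1 = G.dist w v) :
    p = p' := by
  obtain ⟨q, hq⟩ := hG.connected.exists_walk_length_eq_dist w p
  obtain ⟨q', hq'⟩ := hG.connected.exists_walk_length_eq_dist w p'
  have h := (hG.existsUnique_path w v).unique
    ((q.concat hp).isPath_of_length_eq_dist (by simp [hq, hd]))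
    ((q'.concat hp').isPath_of_length_eq_dist (by simp [hq', hd']))
  simpa using congrArg Walk.penultimate h

end SimpleGraph

namespace List
variable {α : Type*}

lemma Nodup.nextOr_getElem [DecidableEq α] {l : List α} (hl : l.Nodup) {i : ℕ}
    (hi : i < l.length) (d : α) :
    l.nextOr l[i] d = if h : i + 1 < l.length then l[i + 1] else d := by
  have hidx := hl.idxOf_getElem i hi
  have hmem := (mem_dropLast_iff_idxOf_lt (getElem_mem hi)).trans (by rw [hidx])
  split_ifs with h
  · simp only [nextOr_eq_getElem_idxOf_succ_of_mem_dropLast (hmem.mpr (by omega)), hidx]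
  · have hlast : l[i] = l.getLast (ne_nil_of_length_pos (by omega)) := by
      rw [getLast_eq_getElem]; congr 1; omega
    rw [hlast] at hmem ⊢
    exact nextOr_getLast_of_notMem_dropLast _ (fun h' => by have := hmem.mp h'; omega) d

lemma iterate_apply_getElem {g : α → α} {l : List α}
    (hstep : ∀ i (hi : i + 1 < l.length), g l[i] = l[i + 1]) {i j : ℕ} (h : i + j < l.length) :
    g^[j] l[i] = l[i + j] := by
  induction j with
  | zero => rfl
  | succ j ih =>
    rw [Function.iterate_succ_apply', ih (by omega), hstep _ (by omega)]
    rfl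

end List

namespace LiuPaper

open Function

section TreeMap
variable {α : Type*}

/-- The parent map of a tree rooted at `r`. -/
def IsTreeMap (f : α → α) (r : α) : Prop :=
  f r = r ∧ ∀ v, ∃ k, f^[k] v = r

def mapGraph (f : α → α) : SimpleGraph α := SimpleGraph.fromRel fun u v => f u = v

namespace IsTreeMap
variable {f : α → α} {r : α}

lemma eq_root_of_isPeriodicPt (hf : IsTreeMap f r) {v : α} {k : ℕ} (hk : 0 < k)
    (hv : IsPeriodicPt f k v) : v = r := by
  obtain ⟨m, hm⟩ := hf.2 v
  calc v = f^[k * m] v := (hv.mul_const m).eq.symm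
    _ = f^[k * m - m] (f^[m] v) := by
      rw [← iterate_add_apply, Nat.sub_add_cancel (Nat.le_mul_of_pos_left m hk)]
    _ = r := by rw [hm, iterate_fixed hf.1]

lemma apply_ne (hf : IsTreeMap f r) {v : α} (hv : v ≠ r) : f v ≠ v :=
  fun hfv => hv <| hf.eq_root_of_isPeriodicPt one_pos <| by rwa [IsPeriodicPt, iterate_one]

open Classical in
noncomputable def depth (hf : IsTreeMap f r) (v : α) : ℕ := Nat.find (hf.2 v)

lemma iterate_depth (hf : IsTreeMap f r) (v : α) : f^[hf.depth v] v = r := by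
  classical exact Nat.find_spec (hf.2 v)

lemma depth_le (hf : IsTreeMap f r) {v : α} {k : ℕ} (hk : f^[k] v = r) : hf.depth v ≤ k := by
  classical exact Nat.find_min' (hf.2 v) hk

lemma depth_root (hf : IsTreeMap f r) : hf.depth r = 0 :=
  Nat.le_zero.mp (hf.depth_le (k := 0) rfl)

lemma depth_apply (hf : IsTreeMap f r) {v : α} (hv : v ≠ r) :
    hf.depth v = hf.depth (f v) + 1 := by
  have hpos : hf.depth v ≠ 0 := fun h0 => hv (by simpa [h0] using hf.iterate_depth v)
  have h1 : hf.depth (f v) ≤ hf.depth v - 1 := hf.depth_le <| by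
    rw [← iterate_succ_apply, Nat.succ_eq_add_one, Nat.sub_add_cancel (by omega),
      hf.iterate_depth]
  have h2 : hf.depth v ≤ hf.depth (f v) + 1 := hf.depth_le <| by
    rw [iterate_succ_apply, hf.iterate_depth]
  omega

lemma iterate_injOn (hf : IsTreeMap f r) {v : α} {i j : ℕ} (hi : i ≤ hf.depth v)
    (hj : j ≤ hf.depth v) (hij : f^[i] v = f^[j] v) : i = j := by
  wlog hlt : i < j generalizing i j
  · rcases (not_lt.mp hlt).eq_or_lt with h | h
    · exact h.symm
    · exact (this hj hi hij.symm h).symm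
  have hper : IsPeriodicPt f (j - i) (f^[i] v) := by
    rw [IsPeriodicPt, IsFixedPt, ← iterate_add_apply, Nat.sub_add_cancel hlt.le, hij]
  have := hf.depth_le (hf.eq_root_of_isPeriodicPt (by omega) hper)
  omega

lemma adj_apply (hf : IsTreeMap f r) {v : α} (hv : v ≠ r) : (mapGraph f).Adj v (f v) :=
  (SimpleGraph.fromRel_adj _ _ _).mpr ⟨(hf.apply_ne hv).symm, Or.inl rfl⟩

lemma depth_eq_add_one_of_adj (hf : IsTreeMap f r) {u v : α} (huv : (mapGraph f).Adj u v) :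
    hf.depth u = hf.depth v + 1 ∨ hf.depth v = hf.depth u + 1 := by
  obtain ⟨hne, rfl | rfl⟩ := (SimpleGraph.fromRel_adj _ _ _).mp huv
  · exact Or.inl (hf.depth_apply fun hu => hne (by rw [hu, hf.1]))
  · exact Or.inr (hf.depth_apply fun hv => hne (by rw [hv, hf.1]))

lemma exists_walk_length_le (hf : IsTreeMap f r) {k : ℕ} :
    ∀ {v : α}, f^[k] v = r → ∃ p : (mapGraph f).Walk v r, p.length ≤ k := by
  induction k with
  | zero => rintro v rfl; exact ⟨.nil, le_rfl⟩
  | succ k ih =>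
    intro v hv
    by_cases hvr : v = r
    · subst hvr; exact ⟨.nil, by simp⟩
    · obtain ⟨p, hp⟩ := ih (v := f v) hv
      exact ⟨.cons (hf.adj_apply hvr) p, by simpa using hp⟩

lemma depth_le_add_length (hf : IsTreeMap f r) {u w : α} (p : (mapGraph f).Walk u w) :
    hf.depth w ≤ hf.depth u + p.length := by
  induction p with
  | nil => simp
  | cons h _ ih =>
    rcases hf.depth_eq_add_one_of_adj h with h' | h' <;>
      simp only [SimpleGraph.Walk.length_cons] <;> omega

lemma connected (hf : IsTreeMap f r) : (mapGraph f).Connected := by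
  have reach (v : α) : (mapGraph f).Reachable v r :=
    ⟨(hf.exists_walk_length_le (hf.iterate_depth v)).choose⟩
  have : Nonempty α := ⟨r⟩
  exact ⟨fun u v => (reach u).trans (reach v).symm⟩

lemma dist_root (hf : IsTreeMap f r) (v : α) : (mapGraph f).dist r v = hf.depth v := by
  obtain ⟨p, hp⟩ := hf.exists_walk_length_le (hf.iterate_depth v)
  obtain ⟨q, hq⟩ := hf.connected.exists_walk_length_eq_dist r v
  have hle := SimpleGraph.dist_le p.reverse
  have hge := hf.depth_le_add_length q
  rw [SimpleGraph.Walk.length_reverse] at hle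
  rw [hf.depth_root, hq] at hge
  omega

lemma isTree [Finite α] (hf : IsTreeMap f r) : (mapGraph f).IsTree := by
  refine SimpleGraph.isTree_iff_connected_and_card.mpr ⟨hf.connected, ?_⟩
  let edge : {v // v ≠ r} → (mapGraph f).edgeSet := fun v =>
    ⟨s(v.1, f v.1), hf.adj_apply v.2⟩
  have hedge : Bijective edge := by
    refine ⟨fun u v huv => Subtype.ext ?_, ?_⟩
    · rcases Sym2.eq_iff.mp (congrArg Subtype.val huv) with ⟨h, -⟩ | ⟨hu, hv⟩
      · exact h
      · have hper : IsPeriodicPt f 2 u.1 := by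
          rw [IsPeriodicPt, IsFixedPt, iterate_succ_apply', iterate_one, hv, hu]
        exact absurd (hf.eq_root_of_isPeriodicPt two_pos hper) u.2
    · rintro ⟨e, he⟩
      induction e using Sym2.inductionOn with
      | hf u v =>
        obtain ⟨hne, rfl | rfl⟩ :=
          (SimpleGraph.fromRel_adj _ _ _).mp ((SimpleGraph.mem_edgeSet _).mp he)
        · exact ⟨⟨u, fun hu => hne (by rw [hu, hf.1])⟩, rfl⟩
        · exact ⟨⟨v, fun hv => hne (by rw [hv, hf.1])⟩, Subtype.ext Sym2.eq_swap⟩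
  have := Fintype.ofFinite α
  classical
  rw [← Nat.card_eq_of_bijective edge hedge]
  simp only [Nat.card_eq_fintype_card, Fintype.card_subtype_compl, Fintype.card_unique]
  have := Fintype.card_pos_iff.mpr ⟨r⟩
  omega

def path (hf : IsTreeMap f r) (h : α) : List α := List.iterate f h (hf.depth h + 1)

lemma length_path (hf : IsTreeMap f r) (h : α) : (hf.path h).length = hf.depth h + 1 :=
  List.length_iterate ..

lemma getElem_path (hf : IsTreeMap f r) (h : α) {i : ℕ} (hi : i < (hf.path h).length) :
    (hf.path h)[i] = f^[i] h :=
  List.getElem_iterate ..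

lemma nodup_path (hf : IsTreeMap f r) (h : α) : (hf.path h).Nodup := by
  refine List.nodup_iff_injective_get.mpr fun i j hij => Fin.ext ?_
  simp only [List.get_eq_getElem, getElem_path] at hij
  have := length_path hf h
  exact hf.iterate_injOn (by omega) (by omega) hij

lemma root_mem_path (hf : IsTreeMap f r) (h : α) : r ∈ hf.path h :=
  List.mem_iterate.mpr ⟨hf.depth h, Nat.lt_succ_self _, (hf.iterate_depth h).symm⟩

end IsTreeMap

end TreeMap

section Periodic
variable {α : Type*} {f g : α → α}

lemma exists_iterate_mem_periodicPts [Finite α] (f : α → α) (v : α) :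
    ∃ k, f^[k] v ∈ periodicPts f := by
  obtain ⟨a, b, hne, hab⟩ := Finite.exists_ne_map_eq_of_infinite (fun k : ℕ => f^[k] v)
  wlog hlt : a < b generalizing a b
  · exact this b a hne.symm hab.symm (by omega)
  refine ⟨a, mk_mem_periodicPts (Nat.sub_pos_of_lt hlt) ?_⟩
  rw [IsPeriodicPt, IsFixedPt, ← iterate_add_apply, Nat.sub_add_cancel hlt.le]
  exact hab.symm

lemma subset_periodicPts_of_mapsTo_of_injOn {s : Set α} (hs : s.Finite)
    (hmaps : Set.MapsTo f s s) (hinj : Set.InjOn f s) : s ⊆ periodicPts f := fun v hv =>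
  have := hs.to_subtype
  (show Semiconj Subtype.val (hmaps.restrict f s s) f from fun _ => rfl).mapsTo_periodicPts
    ((hmaps.restrict_inj.mpr hinj).mem_periodicPts ⟨v, hv⟩)

lemma periodicPts_subset_of_mapsTo {s : Set α} (hmaps : Set.MapsTo f s s)
    (hreach : ∀ v, ∃ k, f^[k] v ∈ s) : periodicPts f ⊆ s := by
  intro v hv
  obtain ⟨p, hp, hper⟩ := mem_periodicPts.mp hv
  obtain ⟨k, hk⟩ := hreach v
  rw [← (hper.mul_const k).eq, show p * k = (p * k - k) + k by
    have := Nat.le_mul_of_pos_left k hp; omega, iterate_add_apply]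
  exact hmaps.iterate _ hk

lemma exists_iterate_mem_of_eqOn_compl {s : Set α} (hfg : ∀ v ∉ s, g v = f v) {k : ℕ} :
    ∀ {v : α}, f^[k] v ∈ s → ∃ m, g^[m] v ∈ s := by
  induction k with
  | zero => exact fun hv => ⟨0, hv⟩
  | succ k ih =>
    intro v hv
    by_cases hvs : v ∈ s
    · exact ⟨0, hvs⟩
    · obtain ⟨m, hm⟩ := ih (v := f v) hv
      exact ⟨m + 1, by rwa [iterate_succ_apply, hfg v hvs]⟩

end Periodic

section JoyalInv
variable {α : Type*} [LinearOrder α]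

namespace IsTreeMap
variable {g : α → α} {r : α}

open Classical in
/-- The inverse of Joyal's construction: the `i`-th smallest point of the path is sent to the
`i`-th point of the path. -/
noncomputable def joyalInv (hg : IsTreeMap g r) (h v : α) : α :=
  if v ∈ hg.path h then (hg.path h).getD ((hg.path h).toFinset.sort.idxOf v) v else g v

lemma joyalInv_of_notMem (hg : IsTreeMap g r) {h v : α} (hv : v ∉ hg.path h) :
    hg.joyalInv h v = g v := by
  simp [joyalInv, hv]

lemma length_sort_path (hg : IsTreeMap g r) (h : α) :
    (hg.path h).toFinset.sort.length = (hg.path h).length := by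
  rw [Finset.length_sort, List.toFinset_card_of_nodup (hg.nodup_path h)]

lemma mem_sort_path (hg : IsTreeMap g r) {h v : α} :
    v ∈ (hg.path h).toFinset.sort ↔ v ∈ hg.path h := by
  simp

lemma joyalInv_sort_getElem (hg : IsTreeMap g r) (h : α) {i : ℕ}
    (hi : i < (hg.path h).toFinset.sort.length) :
    hg.joyalInv h (hg.path h).toFinset.sort[i] = (hg.path h)[i]'(hg.length_sort_path h ▸ hi) := by
  rw [joyalInv, if_pos (hg.mem_sort_path.mp (List.getElem_mem hi)),
    (Finset.sort_nodup _ _).idxOf_getElem, List.getD_eq_getElem]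

lemma exists_sort_getElem (hg : IsTreeMap g r) {h v : α} (hv : v ∈ hg.path h) :
    ∃ i, ∃ hi : i < (hg.path h).toFinset.sort.length, (hg.path h).toFinset.sort[i] = v :=
  List.getElem_of_mem (hg.mem_sort_path.mpr hv)

lemma periodicPts_joyalInv (hg : IsTreeMap g r) (h : α) :
    periodicPts (hg.joyalInv h) = {v | v ∈ hg.path h} := by
  have hmaps : Set.MapsTo (hg.joyalInv h) {v | v ∈ hg.path h} {v | v ∈ hg.path h} := by
    intro v hv
    obtain ⟨i, hi, rfl⟩ := hg.exists_sort_getElem hv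
    rw [Set.mem_ofPred_eq, joyalInv_sort_getElem]
    exact List.getElem_mem _
  refine subset_antisymm (periodicPts_subset_of_mapsTo hmaps fun v => ?_) ?_
  · have hroot : g^[hg.depth v] v ∈ {v | v ∈ hg.path h} := by
      rw [hg.iterate_depth]
      exact hg.root_mem_path h
    exact exists_iterate_mem_of_eqOn_compl (fun v hv => hg.joyalInv_of_notMem hv) hroot
  · refine subset_periodicPts_of_mapsTo_of_injOn (hg.path h).finite_toSet hmaps
      fun u hu w hw huw => ?_
    obtain ⟨i, hi, rfl⟩ := hg.exists_sort_getElem hu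
    obtain ⟨j, hj, rfl⟩ := hg.exists_sort_getElem hw
    rw [joyalInv_sort_getElem, joyalInv_sort_getElem, (hg.nodup_path h).getElem_inj_iff] at huw
    simp [huw]

end IsTreeMap

end JoyalInv

section Joyal
variable {α : Type*} [LinearOrder α] [Fintype α]

open Classical in
noncomputable def spine (f : α → α) : List α :=
  ((periodicPts f).toFinset.sort).map f

lemma mem_spine {f : α → α} {v : α} : v ∈ spine f ↔ v ∈ periodicPts f := by
  classical
  simp only [spine, List.mem_map, Finset.mem_sort, Set.mem_toFinset]
  exact ⟨fun ⟨u, hu, huv⟩ => huv ▸ (bijOn_periodicPts f).mapsTo hu,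
    fun hv => (bijOn_periodicPts f).surjOn hv⟩

lemma nodup_spine (f : α → α) : (spine f).Nodup := by
  classical
  refine List.Nodup.map_on (fun u hu w hw => ?_) (Finset.sort_nodup _ _)
  simp only [Finset.mem_sort, Set.mem_toFinset] at hu hw
  exact fun h => (bijOn_periodicPts f).injOn hu hw h

lemma length_spine_pos [Nonempty α] (f : α → α) : 0 < (spine f).length := by
  obtain ⟨k, hk⟩ := exists_iterate_mem_periodicPts f (Classical.arbitrary α)
  exact List.length_pos_of_mem (mem_spine.mpr hk)

open Classical in
/-- `nextOr v v` is the successor of `v` on the spine, or `v` itself at its end. -/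
noncomputable def joyalMap (f : α → α) (v : α) : α :=
  if v ∈ periodicPts f then (spine f).nextOr v v else f v

lemma joyalMap_of_notMem {f : α → α} {v : α} (hv : v ∉ periodicPts f) :
    joyalMap f v = f v := by
  simp [joyalMap, hv]

lemma joyalMap_spine {f : α → α} {i : ℕ} (hi : i < (spine f).length) :
    joyalMap f (spine f)[i] =
      if h : i + 1 < (spine f).length then (spine f)[i + 1] else (spine f)[i] := by
  rw [joyalMap, if_pos (mem_spine.mp (List.getElem_mem hi)), (nodup_spine f).nextOr_getElem]

lemma iterate_joyalMap_spine {f : α → α} {i j : ℕ} (h : i + j < (spine f).length) :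
    (joyalMap f)^[j] (spine f)[i] = (spine f)[i + j] :=
  List.iterate_apply_getElem (fun i hi => by rw [joyalMap_spine, dif_pos hi]) h

noncomputable def joyalRoot [Nonempty α] (f : α → α) : α :=
  (spine f)[(spine f).length - 1]'(by have := length_spine_pos f; omega)

noncomputable def joyalHead [Nonempty α] (f : α → α) : α :=
  (spine f)[0]'(length_spine_pos f)

lemma isTreeMap_joyalMap [Nonempty α] (f : α → α) : IsTreeMap (joyalMap f) (joyalRoot f) := by
  have hL := length_spine_pos f
  refine ⟨by rw [joyalRoot, joyalMap_spine, dif_neg (by omega)], fun v => ?_⟩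
  obtain ⟨m, hm⟩ := exists_iterate_mem_of_eqOn_compl (s := periodicPts f)
    (fun v hv => joyalMap_of_notMem hv) (exists_iterate_mem_periodicPts f v).choose_spec
  obtain ⟨i, hi, hiv⟩ := List.getElem_of_mem (mem_spine.mpr hm)
  refine ⟨(spine f).length - 1 - i + m, ?_⟩
  rw [iterate_add_apply, ← hiv, iterate_joyalMap_spine (by omega), joyalRoot]
  congr 1
  omega

lemma iterate_joyalMap_joyalHead [Nonempty α] (f : α → α) {j : ℕ}
    (hj : j < (spine f).length) : (joyalMap f)^[j] (joyalHead f) = (spine f)[j] := by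
  have h := iterate_joyalMap_spine (f := f) (i := 0) (j := j) (by omega)
  simp only [Nat.zero_add] at h
  exact h

lemma depth_joyalHead [Nonempty α] (f : α → α) :
    (isTreeMap_joyalMap f).depth (joyalHead f) = (spine f).length - 1 := by
  have hL := length_spine_pos f
  have hf := isTreeMap_joyalMap f
  have hle : hf.depth (joyalHead f) ≤ (spine f).length - 1 :=
    hf.depth_le ((iterate_joyalMap_joyalHead f (by omega)).trans rfl)
  have h := hf.iterate_depth (joyalHead f)
  rw [iterate_joyalMap_joyalHead f (by omega)] at h
  exact (nodup_spine f).getElem_inj_iff.mp h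

namespace IsTreeMap
variable {g : α → α} {r : α}

lemma spine_joyalInv (hg : IsTreeMap g r) (h : α) :
    spine (hg.joyalInv h) = hg.path h := by
  classical
  have hsort : (periodicPts (hg.joyalInv h)).toFinset.sort = (hg.path h).toFinset.sort := by
    congr 1
    ext v
    simp [periodicPts_joyalInv]
  apply List.ext_getElem
  · rw [spine, List.length_map, hsort, length_sort_path]
  · intro i hi _
    simp only [spine, List.getElem_map, hsort, joyalInv_sort_getElem]

lemma joyalMap_joyalInv (hg : IsTreeMap g r) (h : α) : joyalMap (hg.joyalInv h) = g := by
  funext v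
  by_cases hv : v ∈ periodicPts (hg.joyalInv h)
  · obtain ⟨i, hi, rfl⟩ := List.getElem_of_mem (mem_spine.mpr hv)
    have hlen := hg.length_path h
    rw [joyalMap_spine]
    simp only [List.getElem_of_eq (hg.spine_joyalInv h), getElem_path]
    split_ifs with hi'
    · rw [iterate_succ_apply']
    · rw [hg.spine_joyalInv h] at hi hi'
      rw [show i = hg.depth h by omega, hg.iterate_depth, hg.1]
  · rw [periodicPts_joyalInv, Set.mem_ofPred_eq] at hv
    rw [joyalMap_of_notMem (by rwa [periodicPts_joyalInv]), hg.joyalInv_of_notMem hv]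

lemma joyalRoot_joyalInv [Nonempty α] (hg : IsTreeMap g r) (h : α) :
    joyalRoot (hg.joyalInv h) = r := by
  have hlen : (spine (hg.joyalInv h)).length - 1 = hg.depth h := by
    rw [hg.spine_joyalInv h, hg.length_path h, Nat.add_sub_cancel]
  rw [joyalRoot, List.getElem_of_eq (hg.spine_joyalInv h), getElem_path, hlen, hg.iterate_depth]

lemma joyalHead_joyalInv [Nonempty α] (hg : IsTreeMap g r) (h : α) :
    joyalHead (hg.joyalInv h) = h := by
  rw [joyalHead, List.getElem_of_eq (hg.spine_joyalInv h), getElem_path, iterate_zero_apply]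

end IsTreeMap

lemma path_joyalMap [Nonempty α] (f : α → α) :
    (isTreeMap_joyalMap f).path (joyalHead f) = spine f := by
  have hL := length_spine_pos f
  apply List.ext_getElem
  · rw [IsTreeMap.length_path, depth_joyalHead]
    omega
  · intro i hi hi'
    rw [IsTreeMap.getElem_path, iterate_joyalMap_joyalHead]

lemma joyalInv_joyalMap [Nonempty α] (f : α → α) :
    (isTreeMap_joyalMap f).joyalInv (joyalHead f) = f := by
  classical
  funext v
  simp only [IsTreeMap.joyalInv, path_joyalMap]
  split_ifs with hv
  · have hsort : (spine f).toFinset.sort = (periodicPts f).toFinset.sort := by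
      congr 1
      ext w
      simp [mem_spine]
    have hvC : v ∈ (periodicPts f).toFinset.sort := by simpa using mem_spine.mp hv
    have hidx := List.idxOf_lt_length_of_mem hvC
    rw [hsort, List.getD_eq_getElem _ _ (by simpa [spine] using hidx)]
    simp only [spine, List.getElem_map, List.getElem_idxOf]
  · exact joyalMap_of_notMem (mem_spine.not.mp hv)

noncomputable def joyalEquiv [Nonempty α] :
    (α → α) ≃ {p : (α → α) × α // IsTreeMap p.1 p.2} × α where
  toFun f := (⟨(joyalMap f, joyalRoot f), isTreeMap_joyalMap f⟩, joyalHead f)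
  invFun p := p.1.2.joyalInv p.2
  left_inv := joyalInv_joyalMap
  right_inv := by
    rintro ⟨⟨⟨g, r⟩, hg⟩, h⟩
    simp only [hg.joyalMap_joyalInv, hg.joyalRoot_joyalInv, hg.joyalHead_joyalInv]

lemma card_isTreeMap_mul [Nonempty α] :
    Nat.card {p : (α → α) × α // IsTreeMap p.1 p.2} * Nat.card α =
      Nat.card α ^ Nat.card α := by
  rw [← Nat.card_prod, ← Nat.card_congr joyalEquiv, Nat.card_fun]

end Joyal

section RootedTree
variable {n : ℕ} {T : RootedTree n} {u v : Fin n}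

lemma ParentOf.ne_root (h : ParentOf T u v) : v ≠ T.root := by
  rintro rfl
  have := h.2
  rw [SimpleGraph.dist_self] at this
  omega

lemma ParentOf.not_symm (h : ParentOf T u v) : ¬ParentOf T v u := fun h' => by
  have := h.2; have := h'.2; omega

lemma ParentOf.unique {u' : Fin n} (h : ParentOf T u v) (h' : ParentOf T u' v) : u = u' :=
  T.isTree.eq_of_adj_of_dist_add_one h.1 h'.1 h.2 h'.2

lemma exists_parentOf (hv : v ≠ T.root) : ∃ u, ParentOf T u v :=
  T.isTree.exists_adj_dist_add_one hv

lemma adj_iff_parentOf_or_parentOf : T.graph.Adj u v ↔ ParentOf T u v ∨ ParentOf T v u := by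
  refine ⟨fun h => ?_, fun h => h.elim (·.1) (·.1.symm)⟩
  rcases T.isTree.dist_eq_dist_add_one_of_adj T.root h with h' | h'
  · exact Or.inr ⟨h.symm, h'.symm⟩
  · exact Or.inl ⟨h, h'.symm⟩

lemma eq_root_iff_forall_not_parentOf : v = T.root ↔ ∀ u, ¬ParentOf T u v := by
  refine ⟨fun hv u h => h.ne_root hv, fun h => ?_⟩
  by_contra hv
  obtain ⟨u, hu⟩ := exists_parentOf hv
  exact h u hu

lemma RootedTree.ext_of_parentOf {T T' : RootedTree n}
    (h : ∀ u v, ParentOf T u v ↔ ParentOf T' u v) : T = T' := by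
  have hgraph : T.graph = T'.graph := by
    ext u v
    rw [adj_iff_parentOf_or_parentOf, adj_iff_parentOf_or_parentOf, h, h]
  have hroot : T.root = T'.root :=
    eq_root_iff_forall_not_parentOf.mpr fun u hu => ((h u T.root).mpr hu).ne_root rfl
  cases T; cases T'
  simp_all

noncomputable def parentMap (T : RootedTree n) (v : Fin n) : Fin n :=
  if hv : v = T.root then v else (exists_parentOf hv).choose

lemma parentOf_iff_parentMap : ParentOf T u v ↔ v ≠ T.root ∧ parentMap T v = u := by
  constructor
  · intro h
    refine ⟨h.ne_root, ?_⟩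
    rw [parentMap, dif_neg h.ne_root]
    exact (exists_parentOf h.ne_root).choose_spec.unique h
  · rintro ⟨hv, rfl⟩
    rw [parentMap, dif_neg hv]
    exact (exists_parentOf hv).choose_spec

lemma isTreeMap_parentMap (T : RootedTree n) : IsTreeMap (parentMap T) T.root := by
  refine ⟨by simp [parentMap], fun v => ?_⟩
  induction hd : T.graph.dist T.root v generalizing v with
  | zero => exact ⟨0, ((T.isTree.connected.dist_eq_zero_iff).mp hd).symm⟩
  | succ d ih =>
    have hv : v ≠ T.root := by rintro rfl; simp at hd
    have hp := parentOf_iff_parentMap.mpr ⟨hv, rfl⟩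
    obtain ⟨k, hk⟩ := ih (parentMap T v) (by have := hp.2; omega)
    exact ⟨k + 1, hk⟩

def IsTreeMap.rootedTree {f : Fin n → Fin n} {r : Fin n} (hf : IsTreeMap f r) : RootedTree n :=
  ⟨mapGraph f, hf.isTree, r⟩

lemma IsTreeMap.parentOf_rootedTree {f : Fin n → Fin n} {r : Fin n} (hf : IsTreeMap f r) :
    ParentOf hf.rootedTree u v ↔ v ≠ r ∧ f v = u := by
  change (mapGraph f).Adj u v ∧ (mapGraph f).dist r u + 1 = (mapGraph f).dist r v ↔ _
  rw [hf.dist_root, hf.dist_root]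
  constructor
  · rintro ⟨huv, hd⟩
    have hv : v ≠ r := fun hv => by rw [hv, hf.depth_root] at hd; omega
    refine ⟨hv, ?_⟩
    obtain ⟨-, hfu | hfv⟩ := (SimpleGraph.fromRel_adj _ _ _).mp huv
    · have hu : u ≠ r := fun hu => huv.ne (by rw [← hfu, hu, hf.1])
      have := hf.depth_apply hu
      rw [hfu] at this
      omega
    · exact hfv
  · rintro ⟨hv, rfl⟩
    exact ⟨(hf.adj_apply hv).symm, (hf.depth_apply hv).symm⟩

lemma parentMap_rootedTree {f : Fin n → Fin n} {r : Fin n} (hf : IsTreeMap f r) :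
    parentMap hf.rootedTree = f := by
  funext v
  by_cases hv : v = r
  · rw [hv, parentMap, dif_pos (show r = hf.rootedTree.root from rfl), hf.1]
  · exact (parentOf_iff_parentMap.mp (hf.parentOf_rootedTree.mpr ⟨hv, rfl⟩)).2

lemma card_rootedTree (hn : 1 ≤ n) : Nat.card (RootedTree n) = n ^ (n - 1) := by
  let toTreeMap (T : RootedTree n) : {p : (Fin n → Fin n) × Fin n // IsTreeMap p.1 p.2} :=
    ⟨(parentMap T, T.root), isTreeMap_parentMap T⟩
  have hbij : Function.Bijective toTreeMap := by
    refine ⟨fun T T' h => RootedTree.ext_of_parentOf fun u v => ?_, ?_⟩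
    · simp only [toTreeMap, Subtype.mk.injEq, Prod.mk.injEq] at h
      rw [parentOf_iff_parentMap, parentOf_iff_parentMap, h.1, h.2]
    · rintro ⟨⟨f, r⟩, hf⟩
      exact ⟨hf.rootedTree, Subtype.ext (Prod.ext (parentMap_rootedTree hf) rfl)⟩
  have : Nonempty (Fin n) := ⟨⟨0, hn⟩⟩
  have hcard := card_isTreeMap_mul (α := Fin n)
  have hpow : n ^ n = n ^ (n - 1) * n := by rw [← pow_succ, Nat.sub_add_cancel hn]
  rw [← Nat.card_eq_of_bijective toTreeMap hbij, Nat.card_eq_fintype_card (α := Fin n),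
    Fintype.card_fin, hpow] at hcard
  exact Nat.eq_of_mul_eq_mul_right hn hcard

end RootedTree

section ColorParent
variable {n : ℕ}

def ColorParent (G : TCGraph n) (u v : Fin n) : Prop :=
  (u < v ∧ G s(u, v) = some Col.red) ∨ (v < u ∧ G s(u, v) = some Col.blue)

lemma ColorParent.adj {G : TCGraph n} {u v : Fin n} (h : ColorParent G u v) :
    (toSG G).Adj u v := by
  rcases h with ⟨huv, hc⟩ | ⟨huv, hc⟩ <;> exact ⟨by omega, by simp [hc]⟩

lemma ColorParent.not_symm {G : TCGraph n} {u v : Fin n} (h : ColorParent G u v) :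
    ¬ColorParent G v u := by
  rw [ColorParent, Sym2.eq_swap]
  rcases h with ⟨huv, hc⟩ | ⟨huv, hc⟩ <;> simp [hc, huv, huv.not_gt]

lemma colorParent_or_colorParent {G : TCGraph n} {u v : Fin n} (h : (toSG G).Adj u v) :
    ColorParent G u v ∨ ColorParent G v u := by
  obtain ⟨hne, hG⟩ := h
  obtain ⟨c, hc⟩ := Option.ne_none_iff_exists'.mp hG
  have hc' : G s(v, u) = some c := by rwa [Sym2.eq_swap]
  rcases hne.lt_or_gt with huv | hvu <;> cases c <;> simp [ColorParent, *]

open Classical in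
lemma apply_mk_of_lt (G : TCGraph n) {i j : Fin n} (hij : i < j) :
    G s(i, j) = if ColorParent G i j then some Col.red
      else if ColorParent G j i then some Col.blue else none := by
  have hswap : G s(j, i) = G s(i, j) := by rw [Sym2.eq_swap]
  rcases hG : G s(i, j) with _ | _ | _ <;>
    simp [ColorParent, hswap, hG, hij, hij.not_gt]

lemma eq_of_colorParent_iff {G G' : TCGraph n} (hG : Loopless G) (hG' : Loopless G')
    (h : ∀ u v, ColorParent G u v ↔ ColorParent G' u v) : G = G' := by
  have hCP : ColorParent G = ColorParent G' := funext₂ fun u v => propext (h u v)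
  funext e
  induction e using Sym2.inductionOn with
  | hf i j =>
    rcases lt_trichotomy i j with hij | rfl | hji
    · rw [apply_mk_of_lt G hij, apply_mk_of_lt G' hij, hCP]
    · exact (hG i).trans (hG' i).symm
    · rw [Sym2.eq_swap, apply_mk_of_lt G hji, apply_mk_of_lt G' hji, hCP]

lemma patternFree_iff_colorParent_unique {G : TCGraph n} :
    (¬Pat1r3r2 G ∧ ¬Pat2b1b3 G ∧ ¬Pat1r2b3 G) ↔
      ∀ u u' v, ColorParent G u v → ColorParent G u' v → u = u' := by
  have swap : ∀ a b : Fin n, G s(a, b) = G s(b, a) := fun a b => by rw [Sym2.eq_swap]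
  constructor
  · rintro ⟨h1, h2, h3⟩ u u' v hu hu'
    by_contra hne
    wlog hlt : u < u' generalizing u u'
    · exact this u' u hu' hu (Ne.symm hne) (by omega)
    rcases hu with ⟨l1, c1⟩ | ⟨l1, c1⟩ <;> rcases hu' with ⟨l2, c2⟩ | ⟨l2, c2⟩
    · exact h1 ⟨u, u', v, hlt, l2, c1, c2⟩
    · exact h3 ⟨u, v, u', l1, l2, c1, by rwa [swap]⟩
    · omega
    · exact h2 ⟨v, u, u', l1, hlt, by rwa [swap], by rwa [swap]⟩
  · intro huniq
    refine ⟨?_, ?_, ?_⟩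
    · rintro ⟨i, j, k, hij, hjk, hik, hjk'⟩
      exact hij.ne (huniq i j k (Or.inl ⟨by omega, hik⟩) (Or.inl ⟨hjk, hjk'⟩))
    · rintro ⟨i, j, k, hij, hjk, hij', hik⟩
      exact hjk.ne <|
        huniq j k i (Or.inr ⟨hij, by rwa [swap]⟩) (Or.inr ⟨by omega, by rwa [swap]⟩)
    · rintro ⟨i, j, k, hij, hjk, hij', hjk'⟩
      exact (hij.trans hjk).ne <|
        huniq i k j (Or.inl ⟨hij, hij'⟩) (Or.inr ⟨hjk, by rwa [swap]⟩)

end ColorParent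

section ColorMap
variable {n : ℕ}

open Classical in
lemma colorMap_apply (T : RootedTree n) (i j : Fin n) :
    colorMap T s(i, j) =
      if T.graph.Adj i j then
        (if (ParentOf T i j ∧ i < j) ∨ (ParentOf T j i ∧ j < i) then some Col.red
         else some Col.blue)
      else none := rfl

lemma loopless_colorMap (T : RootedTree n) : Loopless (colorMap T) := fun v => by
  simp [Sym2.diag, colorMap_apply]

lemma toSG_colorMap (T : RootedTree n) : toSG (colorMap T) = T.graph := by
  ext i j
  simp only [toSG, colorMap_apply]
  by_cases h : T.graph.Adj i j
  · simp only [h, if_true, ne_eq, iff_true]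
    exact ⟨h.ne, by split_ifs <;> simp⟩
  · simp [h]

lemma colorParent_colorMap_iff (T : RootedTree n) {u v : Fin n} :
    ColorParent (colorMap T) u v ↔ ParentOf T u v := by
  constructor
  · rintro (⟨huv, hc⟩ | ⟨hvu, hc⟩) <;> rw [colorMap_apply] at hc <;>
      split_ifs at hc with hadj hcond <;> simp only [reduceCtorEq, Option.some.injEq] at hc
    · rcases hcond with h | ⟨-, h⟩
      exacts [h.1, absurd h huv.not_gt]
    · exact (adj_iff_parentOf_or_parentOf.mp hadj).resolve_right fun h =>
        hcond (Or.inr ⟨h, hvu⟩)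
  · intro h
    rcases lt_or_gt_of_ne h.1.ne with huv | hvu
    · refine Or.inl ⟨huv, ?_⟩
      rw [colorMap_apply, if_pos h.1, if_pos (Or.inl ⟨h, huv⟩)]
    · refine Or.inr ⟨hvu, ?_⟩
      rw [colorMap_apply, if_pos h.1, if_neg]
      rintro (⟨-, h'⟩ | ⟨h', -⟩)
      exacts [h'.not_gt hvu, h.not_symm h']

lemma colorMap_injective : Function.Injective (colorMap (n := n)) := fun T T' h =>
  RootedTree.ext_of_parentOf fun u v => by
    rw [← colorParent_colorMap_iff, ← colorParent_colorMap_iff, h]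

lemma colorMap_mem_Gbar (T : RootedTree n) : colorMap T ∈ Gbar n := by
  refine ⟨loopless_colorMap T, (toSG_colorMap T).symm ▸ T.isTree,
    patternFree_iff_colorParent_unique.mpr fun u u' v hu hu' => ?_⟩
  rw [colorParent_colorMap_iff] at hu hu'
  exact hu.unique hu'

/-- Otherwise `v ↦ s(parent v, v)` would embed the `n` vertices into the `n - 1` edges. -/
lemma exists_forall_not_colorParent {G : TCGraph n} (hT : (toSG G).IsTree) :
    ∃ r, ∀ u, ¬ColorParent G u r := by
  classical
  by_contra! hpar
  choose p hp using hpar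
  have hinj : Function.Injective fun v => (⟨s(p v, v), (hp v).adj⟩ : (toSG G).edgeSet) := by
    intro v w hvw
    rcases Sym2.eq_iff.mp (congrArg Subtype.val hvw) with ⟨-, h⟩ | ⟨hpv, hv⟩
    · exact h
    · have hwv : ColorParent G w v := hpv ▸ hp v
      exact absurd (by rw [hv]; exact hp w) hwv.not_symm
  have hcard := (SimpleGraph.isTree_iff_connected_and_card.mp hT).2
  have : Nat.card (Fin n) ≤ Nat.card (toSG G).edgeSet := Nat.card_le_card_of_injective _ hinj
  simp only [Nat.card_eq_fintype_card (α := Fin n), Fintype.card_fin] at hcard this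
  omega

lemma parentOf_iff_colorParent {G : TCGraph n} (hT : (toSG G).IsTree)
    (huniq : ∀ u u' v, ColorParent G u v → ColorParent G u' v → u = u') {r : Fin n}
    (hr : ∀ u, ¬ColorParent G u r) (u v : Fin n) :
    ParentOf ⟨toSG G, hT, r⟩ u v ↔ ColorParent G u v := by
  have hsub : ∀ u v, ColorParent G u v → ParentOf ⟨toSG G, hT, r⟩ u v := by
    intro u v huv
    induction hd : (toSG G).dist r v using Nat.strong_induction_on generalizing u v with
    | _ d ih =>
      have hv : v ≠ r := by rintro rfl; exact hr u huv
      obtain ⟨p, hp⟩ := exists_parentOf (T := ⟨toSG G, hT, r⟩) hv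
      rcases colorParent_or_colorParent hp.1 with hpv | hvp
      · rwa [huniq u p v huv hpv]
      · have hdist : (toSG G).dist r p + 1 = (toSG G).dist r v := hp.2
        exact absurd (ih _ (by omega) v p hvp rfl) hp.not_symm
  exact ⟨fun h => (colorParent_or_colorParent h.1).resolve_right fun h' =>
    h.not_symm (hsub _ _ h'), hsub u v⟩

lemma exists_colorMap_eq {G : TCGraph n} (hG : G ∈ Gbar n) : ∃ T, colorMap T = G := by
  obtain ⟨hloop, hT, hpat⟩ := hG
  obtain ⟨r, hr⟩ := exists_forall_not_colorParent hT
  refine ⟨⟨toSG G, hT, r⟩, eq_of_colorParent_iff (loopless_colorMap _) hloop fun u v => ?_⟩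
  rw [colorParent_colorMap_iff,
    parentOf_iff_colorParent hT (patternFree_iff_colorParent_unique.mp hpat) hr]

lemma range_colorMap : Set.range (colorMap (n := n)) = Gbar n := by
  ext G
  exact ⟨by rintro ⟨T, rfl⟩; exact colorMap_mem_Gbar T, exists_colorMap_eq⟩

end ColorMap

theorem stmt0 (n : ℕ) (hn : 1 ≤ n) :
    Function.Injective (colorMap (n := n)) ∧
    Set.range (colorMap (n := n)) = Gbar n ∧
    Nat.card (Gbar n) = n ^ (n - 1) := by
  refine ⟨colorMap_injective, range_colorMap, ?_⟩
  rw [← range_colorMap, Nat.card_range_of_injective colorMap_injective, card_rootedTree hn]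

end LiuPaper
end
end

section
/- The pairing vanishes on relations in the second argument: ⟨⟨β, α⟩⟩ = 0 for every β ∈ Γ_n and every α ∈ J_n. -/
/-
Formalization of definitions and a statement from:
"Combinatorial bases for multilinear parts of free algebras with double compatible brackets"
(Fu Liu).  The alphabet X = {x_1 < ... < x_n} is identified with Fin n.
-/

noncomputable section
namespace LiuPaper

attribute [local instance] Classical.propDecidable

/-! ### 2v-colored binary trees, `Θ_n`, `J_n` and `Lie₂(n)` -/

/-- A 2v-colored binary tree with leaves labeled by elements of `Fin n`:
internal vertices are colored red (the bracket `[.,.]`) or blue (the bracket `⟨.,.⟩`). -/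
inductive CBT (n : ℕ) : Type
  | leaf : Fin n → CBT n
  | node : Col → CBT n → CBT n → CBT n
  deriving DecidableEq

/-- The list of leaf labels of a 2v-colored binary tree, from left to right. -/
def leavesCBT {n : ℕ} : CBT n → List (Fin n)
  | .leaf x => [x]
  | .node _ l r => leavesCBT l ++ leavesCBT r

/-- A tree is multilinear when its leaves are labeled bijectively by `Fin n`. -/
def Multilinear {n : ℕ} (t : CBT n) : Prop :=
  (leavesCBT t).Nodup ∧ ∀ x : Fin n, x ∈ leavesCBT t

/-- `ℬ𝒯_n`: 2v-colored binary trees whose leaves are labeled bijectively by `X = Fin n`. -/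
def BT (n : ℕ) : Type := {t : CBT n // Multilinear t}

/-- A one-hole context for 2v-colored binary trees. -/
inductive Ctx (n : ℕ) : Type
  | hole : Ctx n
  | nodeL : Col → Ctx n → CBT n → Ctx n
  | nodeR : Col → CBT n → Ctx n → Ctx n

/-- Filling the hole of a context with a tree. -/
def fillCtx {n : ℕ} : Ctx n → CBT n → CBT n
  | .hole, t => t
  | .nodeL c C r, t => .node c (fillCtx C t) r
  | .nodeR c l C, t => .node c l (fillCtx C t)

variable (R : Type*) [CommRing R]

/-- `Θ_n`: the free `R`-module on `ℬ𝒯_n`. -/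
abbrev Theta (n : ℕ) : Type _ := BT n →₀ R

/-- Symmetry combinations: `T₁ + T₂` where `T₂` is obtained from `T₁` by swapping the left and
right subtrees at one internal vertex. -/
def symCombs (n : ℕ) : Set (Theta R n) :=
  {x | ∃ (T₁ T₂ : BT n) (C : Ctx n) (c : Col) (a b : CBT n),
    T₁.1 = fillCtx C (.node c a b) ∧ T₂.1 = fillCtx C (.node c b a) ∧
    x = Finsupp.single T₁ 1 + Finsupp.single T₂ 1}

/-- Jacobi combinations: `T₁ + T₂ + T₃` where at some subtree of `T₁`, the root and the right
child of the root have the same color, and `T₂`, `T₃` are obtained by cyclic rotation of the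
three constituent subtrees. -/
def jacCombs (n : ℕ) : Set (Theta R n) :=
  {x | ∃ (T₁ T₂ T₃ : BT n) (C : Ctx n) (c : Col) (A B D : CBT n),
    T₁.1 = fillCtx C (.node c A (.node c B D)) ∧
    T₂.1 = fillCtx C (.node c B (.node c D A)) ∧
    T₃.1 = fillCtx C (.node c D (.node c A B)) ∧
    x = Finsupp.single T₁ 1 + Finsupp.single T₂ 1 + Finsupp.single T₃ 1}

/-- Mixed Jacobi combinations: the sum of six trees, obtained from two copies of a red Jacobi
combination by recoloring from red to blue the right child of the root of each involved subtree
in the first copy, and the root of each involved subtree in the second copy. -/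
def mixCombs (n : ℕ) : Set (Theta R n) :=
  {x | ∃ (T₁ T₂ T₃ T₄ T₅ T₆ : BT n) (C : Ctx n) (A B D : CBT n),
    T₁.1 = fillCtx C (.node .red A (.node .blue B D)) ∧
    T₂.1 = fillCtx C (.node .red B (.node .blue D A)) ∧
    T₃.1 = fillCtx C (.node .red D (.node .blue A B)) ∧
    T₄.1 = fillCtx C (.node .blue A (.node .red B D)) ∧
    T₅.1 = fillCtx C (.node .blue B (.node .red D A)) ∧
    T₆.1 = fillCtx C (.node .blue D (.node .red A B)) ∧
    x = Finsupp.single T₁ 1 + Finsupp.single T₂ 1 + Finsupp.single T₃ 1 +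
        Finsupp.single T₄ 1 + Finsupp.single T₅ 1 + Finsupp.single T₆ 1}

/-- `J_n ⊆ Θ_n`: the submodule generated by symmetry, Jacobi, and mixed Jacobi combinations. -/
def Jn (n : ℕ) : Submodule R (Theta R n) :=
  Submodule.span R (symCombs R n ∪ jacCombs R n ∪ mixCombs R n)

/-- `Lie₂(n) = Θ_n / J_n`, the multilinear part of the free Lie algebra on `X` with two
compatible brackets. -/
abbrev Lie2 (n : ℕ) : Type _ := Theta R n ⧸ Jn R n

/-! ### Oriented two-colored graphs, `Γ_n`, `I_n` and `Eil₂(n)` -/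

/-- An oriented two-colored graph on `Fin n`: each ordered pair of distinct vertices either
carries no edge or a directed edge colored red or blue. -/
structure OGraph (n : ℕ) where
  dir : Fin n → Fin n → Option Col
  loopless : ∀ v : Fin n, dir v v = none

/-- The underlying undirected simple graph of an oriented two-colored graph. -/
def toSGO {n : ℕ} (G : OGraph n) : SimpleGraph (Fin n) where
  Adj i j := i ≠ j ∧ (G.dir i j ≠ none ∨ G.dir j i ≠ none)
  symm := ⟨by rintro i j ⟨h1, h2⟩; exact ⟨h1.symm, h2.symm⟩⟩
  loopless := ⟨fun v hv => hv.1 rfl⟩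

/-- The graph has at most one edge between any two vertices. -/
def NoMulti {n : ℕ} (G : OGraph n) : Prop := ∀ i j : Fin n, G.dir i j = none ∨ G.dir j i = none

/-- An oriented two-colored graph is a tree on `X` when it is connected and its underlying
undirected (multi)graph is acyclic. -/
def IsOTree {n : ℕ} (G : OGraph n) : Prop := (toSGO G).IsTree ∧ NoMulti G

/-- `Γ_n`: the free `R`-module on the oriented two-colored graphs. -/
abbrev Gamma (n : ℕ) : Type _ := OGraph n →₀ R

/-- Generators of `I_n`: disconnected graphs. -/
def disconnSet (n : ℕ) : Set (Gamma R n) :=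
  {x | ∃ G : OGraph n, ¬(toSGO G).Connected ∧ x = Finsupp.single G 1}

/-- Generators of `I_n`: graphs with more than one edge between some pair of vertices. -/
def multiSet (n : ℕ) : Set (Gamma R n) :=
  {x | ∃ G : OGraph n, (∃ i j : Fin n, G.dir i j ≠ none ∧ G.dir j i ≠ none) ∧
    x = Finsupp.single G 1}

/-- Symmetry combinations in `Γ_n`: `G₁ + G₂` where `G₂` reverses one edge of `G₁`. -/
def symOSet (n : ℕ) : Set (Gamma R n) :=
  {x | ∃ (G₁ G₂ : OGraph n) (i j : Fin n) (c : Col),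
    G₁.dir i j = some c ∧ G₁.dir j i = none ∧
    G₂.dir i j = none ∧ G₂.dir j i = some c ∧
    (∀ p q : Fin n, ¬((p = i ∧ q = j) ∨ (p = j ∧ q = i)) → G₂.dir p q = G₁.dir p q) ∧
    x = Finsupp.single G₁ 1 + Finsupp.single G₂ 1}

/-- `Tri G i j k c₁ c₂`: within the triangle `{i,j,k}`, `G` has exactly the two edges
`i → j` (colored `c₁`) and `j → k` (colored `c₂`). -/
def Tri {n : ℕ} (G : OGraph n) (i j k : Fin n) (c₁ c₂ : Col) : Prop :=
  G.dir i j = some c₁ ∧ G.dir j k = some c₂ ∧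
  G.dir j i = none ∧ G.dir k j = none ∧ G.dir i k = none ∧ G.dir k i = none

/-- `(p,q)` is an ordered pair not supported on the unordered pairs
`{i,j}`, `{j,k}`, `{k,i}`. -/
def OffTri {n : ℕ} (i j k p q : Fin n) : Prop :=
  ¬((p = i ∧ q = j) ∨ (p = j ∧ q = i) ∨ (p = j ∧ q = k) ∨ (p = k ∧ q = j) ∨
    (p = k ∧ q = i) ∨ (p = i ∧ q = k))

/-- Jacobi combinations in `Γ_n`: `G₁ + G₂ + G₃` agreeing outside a two-edge same-colored
subgraph `{i→j, j→k}` whose subgraphs in `G₂`, `G₃` are the cyclic rotations of `i,j,k`. -/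
def jacOSet (n : ℕ) : Set (Gamma R n) :=
  {x | ∃ (G₁ G₂ G₃ : OGraph n) (i j k : Fin n) (c : Col),
    i ≠ j ∧ j ≠ k ∧ i ≠ k ∧
    Tri G₁ i j k c c ∧ Tri G₂ j k i c c ∧ Tri G₃ k i j c c ∧
    (∀ p q : Fin n, OffTri i j k p q →
      G₂.dir p q = G₁.dir p q ∧ G₃.dir p q = G₁.dir p q) ∧
    x = Finsupp.single G₁ 1 + Finsupp.single G₂ 1 + Finsupp.single G₃ 1}

/-- Mixed Jacobi combinations in `Γ_n`: obtained from two copies of a red Jacobi combination by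
recoloring from red to blue one edge of the two-edge subgraph in the first copy and the other
edge in the second copy. -/
def mixOSet (n : ℕ) : Set (Gamma R n) :=
  {x | ∃ (G₁ G₂ G₃ G₄ G₅ G₆ : OGraph n) (i j k : Fin n),
    i ≠ j ∧ j ≠ k ∧ i ≠ k ∧
    Tri G₁ i j k Col.red Col.blue ∧ Tri G₂ j k i Col.red Col.blue ∧
    Tri G₃ k i j Col.red Col.blue ∧
    Tri G₄ i j k Col.blue Col.red ∧ Tri G₅ j k i Col.blue Col.red ∧
    Tri G₆ k i j Col.blue Col.red ∧
    (∀ p q : Fin n, OffTri i j k p q →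
      G₂.dir p q = G₁.dir p q ∧ G₃.dir p q = G₁.dir p q ∧ G₄.dir p q = G₁.dir p q ∧
      G₅.dir p q = G₁.dir p q ∧ G₆.dir p q = G₁.dir p q) ∧
    x = Finsupp.single G₁ 1 + Finsupp.single G₂ 1 + Finsupp.single G₃ 1 +
        Finsupp.single G₄ 1 + Finsupp.single G₅ 1 + Finsupp.single G₆ 1}

/-- `I_n ⊆ Γ_n`: the submodule generated by disconnected graphs, graphs with multiple edges,
symmetry combinations, Jacobi combinations and mixed Jacobi combinations. -/
def In (n : ℕ) : Submodule R (Gamma R n) :=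
  Submodule.span R (disconnSet R n ∪ multiSet R n ∪ symOSet R n ∪ jacOSet R n ∪ mixOSet R n)

/-- `Eil₂(n) = Γ_n / I_n`. -/
abbrev Eil2 (n : ℕ) : Type _ := Gamma R n ⧸ In R n

/-- The consistent orientation `o_G` of a two-colored graph: a red edge `{i,j}` with `i<j`
is oriented `i → j`, a blue one `j → i`. -/
def orient {n : ℕ} (G : TCGraph n) : OGraph n where
  dir i j :=
    if i < j then (if G s(i, j) = some Col.red then some Col.red else none)
    else if j < i then (if G s(i, j) = some Col.blue then some Col.blue else none)
    else none
  loopless := by intro v; simp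

/-! ### The pairing `⟨⟨ , ⟩⟩` between `Γ_n` and `Θ_n` -/

/-- The position (path from the root; `false` = go left, `true` = go right) of the leaf
labeled `x` in a binary tree, if any. -/
def posIn {n : ℕ} : CBT n → Fin n → Option (List Bool)
  | .leaf y, x => if x = y then some [] else none
  | .node _ l r, x =>
      match posIn l x with
      | some p => some (false :: p)
      | none => (posIn r x).map (fun p => true :: p)

/-- The color of the internal vertex of `T` at position `p`, if `p` is the position of an
internal vertex. -/
def nodeColAt {n : ℕ} : CBT n → List Bool → Option Col
  | .node c _ _, [] => some c
  | .node _ l _, false :: p => nodeColAt l p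
  | .node _ _ r, true :: p => nodeColAt r p
  | .leaf _, _ => none

/-- The list of positions of internal vertices of a binary tree. -/
def internalPos {n : ℕ} : CBT n → List (List Bool)
  | .leaf _ => []
  | .node _ l r =>
      [] :: ((internalPos l).map (fun p => false :: p) ++
             (internalPos r).map (fun p => true :: p))

/-- Longest common prefix of two paths. -/
def lcp : List Bool → List Bool → List Bool
  | a :: p, b :: q => if a = b then a :: lcp p q else []
  | _, _ => []

/-- The nadir `β_{G,T}(e)` of the path in `T` between the leaves `i` and `j`: the vertex of the
path closest to the root, i.e. the longest common prefix of the two leaf positions. -/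
def nadir {n : ℕ} (T : CBT n) (i j : Fin n) : List Bool :=
  lcp ((posIn T i).getD []) ((posIn T j).getD [])

/-- The path from leaf `i` to leaf `j` travels counterclockwise at its nadir:
leaf `i` lies in the right subtree and leaf `j` in the left subtree of the nadir. -/
def Ccw {n : ℕ} (T : CBT n) (i j : Fin n) : Prop :=
  ∃ s p q : List Bool, posIn T i = some (s ++ true :: p) ∧ posIn T j = some (s ++ false :: q)

/-- `β_{G,T}` is a color-preserving bijection from the edges of `G` onto the internal
vertices of `T`. -/
def IsCPB {n : ℕ} (G : OGraph n) (T : CBT n) : Prop :=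
  Set.BijOn (fun e : Fin n × Fin n => nadir T e.1 e.2)
    {e : Fin n × Fin n | G.dir e.1 e.2 ≠ none} {p : List Bool | p ∈ internalPos T} ∧
  ∀ i j : Fin n, G.dir i j ≠ none → nodeColAt T (nadir T i j) = G.dir i j

/-- The sign `τ_{G,T} = (-1)^N`, where `N` is the number of edges of `G` whose path in `T`
travels counterclockwise at its nadir. -/
def tauGT {n : ℕ} (G : OGraph n) (T : CBT n) : R :=
  (-1 : R) ^
    (Finset.univ.filter
      (fun e : Fin n × Fin n => G.dir e.1 e.2 ≠ none ∧ Ccw T e.1 e.2)).card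

/-- The pairing `⟨⟨G, T⟩⟩` of an oriented two-colored graph with a 2v-colored binary tree. -/
def pairGT {n : ℕ} (G : OGraph n) (T : CBT n) : R :=
  if IsCPB G T then tauGT R G T else 0

/-- The bilinear extension of `⟨⟨ , ⟩⟩` to `Γ_n × Θ_n → R`. -/
def pairing {n : ℕ} (β : Gamma R n) (α : Theta R n) : R :=
  β.sum fun G b => α.sum fun T a => b * a * pairGT R G T.1

/-!
Fix a graph `G`; the pairing is linear in the tree, so it suffices that `pairGT G` sums to zero
over every generating combination. A vertex of a tree is addressed by its path from the root, and
the nadir of an edge is the longest common prefix of the positions of its endpoints.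

Each relation is built from moves of a subtree inside a context: swapping the two children of a
vertex, or rotating `c₁ X (c₂ Y Z)` into `c₂ Z (c₁ X Y)`. If a move relocates the nadirs of the
edges of `G` along an injective, color-preserving map of positions (for the rotation this needs
`G` to have no edge between `X` and `Z`), it preserves the existence of a color-preserving
bijection, and exactly one edge reverses its orientation, so the pairing changes sign.

For the (mixed) Jacobi relations, `C[c₁ X (c₂ Y Z)]` pairs to zero with `G` unless `G` has an edge
between `Y` and `Z` and exactly one edge between `X` and `Y ∪ Z`. So either all three pairs among
`A, B, D` are joined by edges of `G` and every term vanishes, or some pair is not, and then the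
terms cancel in pairs by rotation while the remaining ones vanish.
-/

section Paths

def RightOf (u v : List Bool) : Prop :=
  ∃ s p q : List Bool, u = s ++ true :: p ∧ v = s ++ false :: q

@[simp] theorem lcp_nil_left (v : List Bool) : lcp [] v = [] := by cases v <;> rfl

@[simp] theorem lcp_nil_right (u : List Bool) : lcp u [] = [] := by cases u <;> rfl

@[simp] theorem lcp_cons_cons (a b : Bool) (p q : List Bool) :
    lcp (a :: p) (b :: q) = if a = b then a :: lcp p q else [] := rfl

theorem lcp_append (s p q : List Bool) : lcp (s ++ p) (s ++ q) = s ++ lcp p q := by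
  induction s with
  | nil => rfl
  | cons a s ih => simp [ih]

theorem lcp_comm (u v : List Bool) : lcp u v = lcp v u := by
  induction u generalizing v with
  | nil => simp
  | cons a p ih =>
    cases v with
    | nil => simp
    | cons b q => by_cases h : a = b <;> simp [h, ih, eq_comm]

theorem lcp_prefix_left (u v : List Bool) : lcp u v <+: u := by
  induction u generalizing v with
  | nil => simp
  | cons a p ih =>
    cases v with
    | nil => simp
    | cons b q => rw [lcp_cons_cons]; split_ifs <;> simp [ih]

theorem lcp_prefix_right (u v : List Bool) : lcp u v <+: v :=
  lcp_comm v u ▸ lcp_prefix_left v u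

theorem lcp_append_left_of_not_prefix {s v : List Bool} (h : ¬ s <+: v) (w : List Bool) :
    lcp (s ++ w) v = lcp s v := by
  induction s generalizing v with
  | nil => exact absurd List.nil_prefix h
  | cons a s ih =>
    cases v with
    | nil => simp
    | cons b q =>
      by_cases hab : a = b
      · subst hab
        simp [ih (fun h' => h (List.cons_prefix_cons.2 ⟨rfl, h'⟩))]
      · simp [hab]

theorem lcp_append_right_of_not_prefix {s u : List Bool} (h : ¬ s <+: u) (w : List Bool) :
    lcp u (s ++ w) = lcp u s := by
  rw [lcp_comm, lcp_append_left_of_not_prefix h, lcp_comm]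

@[simp] theorem not_rightOf_nil_left (v : List Bool) : ¬ RightOf [] v := by
  rintro ⟨s, p, q, h, -⟩; simp at h

@[simp] theorem not_rightOf_nil_right (u : List Bool) : ¬ RightOf u [] := by
  rintro ⟨s, p, q, -, h⟩; simp at h

@[simp] theorem rightOf_cons_cons (a b : Bool) (u v : List Bool) :
    RightOf (a :: u) (b :: v) ↔ a = true ∧ b = false ∨ a = b ∧ RightOf u v := by
  constructor
  · rintro ⟨_ | ⟨c, s⟩, p, q, h₁, h₂⟩
    · simp only [List.nil_append, List.cons.injEq] at h₁ h₂
      exact .inl ⟨h₁.1, h₂.1⟩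
    · simp only [List.cons_append, List.cons.injEq] at h₁ h₂
      exact .inr ⟨h₁.1.trans h₂.1.symm, s, p, q, h₁.2, h₂.2⟩
  · rintro (⟨rfl, rfl⟩ | ⟨rfl, s, p, q, rfl, rfl⟩)
    · exact ⟨[], u, v, rfl, rfl⟩
    · exact ⟨a :: s, p, q, rfl, rfl⟩

theorem rightOf_append (s u v : List Bool) : RightOf (s ++ u) (s ++ v) ↔ RightOf u v := by
  induction s with
  | nil => rfl
  | cons a s ih => simp [ih]

theorem rightOf_append_left_iff {s v : List Bool} (h : ¬ s <+: v) (w w' : List Bool) :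
    RightOf (s ++ w) v ↔ RightOf (s ++ w') v := by
  induction s generalizing v with
  | nil => exact absurd List.nil_prefix h
  | cons a s ih =>
    cases v with
    | nil => simp
    | cons b q =>
      by_cases hab : a = b
      · subst hab
        simp [ih (fun h' => h (List.cons_prefix_cons.2 ⟨rfl, h'⟩))]
      · simp [hab]

theorem rightOf_append_right_iff {s u : List Bool} (h : ¬ s <+: u) (w w' : List Bool) :
    RightOf u (s ++ w) ↔ RightOf u (s ++ w') := by
  induction s generalizing u with
  | nil => exact absurd List.nil_prefix h
  | cons a s ih =>
    cases u with
    | nil => simp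
    | cons b q =>
      by_cases hab : b = a
      · subst hab
        simp [ih (fun h' => h (List.cons_prefix_cons.2 ⟨rfl, h'⟩))]
      · simp [hab]

def liftAt (s : List Bool) (f : List Bool → List Bool) (q : List Bool) : List Bool :=
  if s <+: q then s ++ f (q.drop s.length) else q

theorem liftAt_append (s : List Bool) (f : List Bool → List Bool) (r : List Bool) :
    liftAt s f (s ++ r) = s ++ f r := by
  simp [liftAt]

theorem liftAt_of_not_prefix {s q : List Bool} (f : List Bool → List Bool) (h : ¬ s <+: q) :
    liftAt s f q = q := if_neg h

theorem liftAt_injective (s : List Bool) {f : List Bool → List Bool} (hf : f.Injective) :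
    (liftAt s f).Injective := by
  intro q₁ q₂ h
  by_cases h₁ : s <+: q₁ <;> by_cases h₂ : s <+: q₂
  · obtain ⟨r₁, rfl⟩ := h₁
    obtain ⟨r₂, rfl⟩ := h₂
    rw [liftAt_append, liftAt_append, List.append_cancel_left_eq] at h
    rw [hf h]
  · obtain ⟨r₁, rfl⟩ := h₁
    rw [liftAt_append, liftAt_of_not_prefix f h₂] at h
    exact absurd (h ▸ List.prefix_append _ _) h₂
  · obtain ⟨r₂, rfl⟩ := h₂
    rw [liftAt_append, liftAt_of_not_prefix f h₁] at h
    exact absurd (h ▸ List.prefix_append _ _) h₁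
  · rwa [liftAt_of_not_prefix f h₁, liftAt_of_not_prefix f h₂] at h

end Paths

section Positions

variable {n : ℕ}

def leafPos (t : CBT n) (x : Fin n) : List Bool := (posIn t x).getD []

theorem mem_leavesCBT_node {c : Col} {l r : CBT n} {x : Fin n} :
    x ∈ leavesCBT (.node c l r) ↔ x ∈ leavesCBT l ∨ x ∈ leavesCBT r := List.mem_append

theorem posIn_eq_none_iff {t : CBT n} {x : Fin n} : posIn t x = none ↔ x ∉ leavesCBT t := by
  induction t with
  | leaf y => by_cases h : x = y <;> simp [posIn, leavesCBT, h]
  | node c l r ihl ihr =>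
    simp only [posIn, leavesCBT, List.mem_append, not_or]
    cases hl : posIn l x <;> simp_all

theorem posIn_eq_some_leafPos {t : CBT n} {x : Fin n} (hx : x ∈ leavesCBT t) :
    posIn t x = some (leafPos t x) := by
  obtain ⟨p, hp⟩ := Option.ne_none_iff_exists'.1 (mt posIn_eq_none_iff.1 (not_not.2 hx))
  simp [leafPos, hp]

theorem leafPos_node_of_mem_left {c : Col} {l r : CBT n} {x : Fin n} (hx : x ∈ leavesCBT l) :
    leafPos (.node c l r) x = false :: leafPos l x := by
  rw [leafPos, posIn, posIn_eq_some_leafPos hx]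
  rfl

theorem leafPos_node_of_mem_right {c : Col} {l r : CBT n} {x : Fin n} (hl : x ∉ leavesCBT l)
    (hr : x ∈ leavesCBT r) : leafPos (.node c l r) x = true :: leafPos r x := by
  rw [leafPos, posIn, posIn_eq_none_iff.2 hl, posIn_eq_some_leafPos hr]
  rfl

theorem nadir_eq_lcp (t : CBT n) (i j : Fin n) :
    nadir t i j = lcp (leafPos t i) (leafPos t j) := rfl

theorem nadir_comm (t : CBT n) (i j : Fin n) : nadir t i j = nadir t j i := lcp_comm _ _

theorem ccw_iff_rightOf {t : CBT n} {i j : Fin n} (hi : i ∈ leavesCBT t)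
    (hj : j ∈ leavesCBT t) : Ccw t i j ↔ RightOf (leafPos t i) (leafPos t j) := by
  simp [Ccw, RightOf, posIn_eq_some_leafPos hi, posIn_eq_some_leafPos hj]

theorem nadir_node_of_mem_left {c : Col} {l r : CBT n} {i j : Fin n} (hi : i ∈ leavesCBT l)
    (hj : j ∈ leavesCBT l) : nadir (.node c l r) i j = false :: nadir l i j := by
  rw [nadir_eq_lcp, leafPos_node_of_mem_left hi, leafPos_node_of_mem_left hj, lcp_cons_cons,
    if_pos rfl, nadir_eq_lcp]

theorem nadir_node_of_mem_right {c : Col} {l r : CBT n} {i j : Fin n} (hi' : i ∉ leavesCBT l)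
    (hj' : j ∉ leavesCBT l) (hi : i ∈ leavesCBT r) (hj : j ∈ leavesCBT r) :
    nadir (.node c l r) i j = true :: nadir r i j := by
  rw [nadir_eq_lcp, leafPos_node_of_mem_right hi' hi, leafPos_node_of_mem_right hj' hj,
    lcp_cons_cons, if_pos rfl, nadir_eq_lcp]

theorem nadir_node_of_mem_left_right {c : Col} {l r : CBT n} {i j : Fin n} (hi : i ∈ leavesCBT l)
    (hj' : j ∉ leavesCBT l) (hj : j ∈ leavesCBT r) : nadir (.node c l r) i j = [] := by
  rw [nadir_eq_lcp, leafPos_node_of_mem_left hi, leafPos_node_of_mem_right hj' hj]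
  simp

theorem leavesCBT_ne_nil (t : CBT n) : leavesCBT t ≠ [] := by
  induction t <;> simp_all [leavesCBT]

theorem nodup_internalPos (t : CBT n) : (internalPos t).Nodup := by
  induction t with
  | leaf => simp [internalPos]
  | node c l r ihl ihr =>
    simp only [internalPos, List.nodup_cons, List.mem_append, List.mem_map, List.nodup_append]
    refine ⟨by simp, ihl.map List.cons_injective, ihr.map List.cons_injective, ?_⟩
    simp

theorem length_internalPos (t : CBT n) : (internalPos t).length + 1 = (leavesCBT t).length := by
  induction t with
  | leaf => simp [internalPos, leavesCBT]
  | node c l r ihl ihr =>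
    have := List.length_pos_iff.2 (leavesCBT_ne_nil l)
    simp only [internalPos, leavesCBT, List.length_cons, List.length_append, List.length_map]
    omega

theorem notMem_of_nodup_node {c : Col} {l r : CBT n} (h : (leavesCBT (.node c l r)).Nodup) :
    (∀ x ∈ leavesCBT l, x ∉ leavesCBT r) ∧ (∀ x ∈ leavesCBT r, x ∉ leavesCBT l) := by
  have h' := (List.nodup_append.1 h).2.2
  exact ⟨fun x hl hr => h' x hl x hr rfl, fun x hr hl => h' x hl x hr rfl⟩

theorem notMem_of_nodup_node_node {c₁ c₂ : Col} {X Y Z : CBT n}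
    (h : (leavesCBT (.node c₁ X (.node c₂ Y Z))).Nodup) :
    (∀ x ∈ leavesCBT X, x ∉ leavesCBT Y ∧ x ∉ leavesCBT Z) ∧
      (∀ x ∈ leavesCBT Y, x ∉ leavesCBT X ∧ x ∉ leavesCBT Z) ∧
      (∀ x ∈ leavesCBT Z, x ∉ leavesCBT X ∧ x ∉ leavesCBT Y) := by
  obtain ⟨hX, hYZ⟩ := notMem_of_nodup_node h
  obtain ⟨hY, hZ⟩ := notMem_of_nodup_node h.of_append_right
  simp only [mem_leavesCBT_node, not_or] at hX hYZ
  exact ⟨fun x hx => hX x hx, fun x hy => ⟨hYZ x (.inl hy), hY x hy⟩,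
    fun x hz => ⟨hYZ x (.inr hz), hZ x hz⟩⟩

theorem nadir_mem_internalPos {t : CBT n} {i j : Fin n} (hnd : (leavesCBT t).Nodup)
    (hi : i ∈ leavesCBT t) (hj : j ∈ leavesCBT t) (hij : i ≠ j) :
    nadir t i j ∈ internalPos t := by
  induction t with
  | leaf y => simp_all [leavesCBT]
  | node c l r ihl ihr =>
    have hdisj := (notMem_of_nodup_node hnd).2
    have hnd' := List.nodup_append.1 hnd
    rw [mem_leavesCBT_node] at hi hj
    rcases hi with hi | hi <;> rcases hj with hj | hj
    · simp [nadir_node_of_mem_left hi hj, internalPos, ihl hnd'.1 hi hj]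
    · simp [nadir_node_of_mem_left_right hi (hdisj j hj) hj, internalPos]
    · simp [nadir_comm _ i, nadir_node_of_mem_left_right hj (hdisj i hi) hi, internalPos]
    · simp [nadir_node_of_mem_right (hdisj i hi) (hdisj j hj) hi hj, internalPos,
        ihr hnd'.2.1 hi hj]

end Positions

section Contexts

variable {n : ℕ}

def ctxPos : Ctx n → List Bool
  | .hole => []
  | .nodeL _ C _ => false :: ctxPos C
  | .nodeR _ _ C => true :: ctxPos C

def compCtx : Ctx n → Ctx n → Ctx n
  | .hole, D => D
  | .nodeL c C r, D => .nodeL c (compCtx C D) r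
  | .nodeR c l C, D => .nodeR c l (compCtx C D)

theorem fillCtx_compCtx (C D : Ctx n) (t : CBT n) :
    fillCtx (compCtx C D) t = fillCtx C (fillCtx D t) := by
  induction C <;> simp_all [compCtx, fillCtx]

theorem leavesCBT_fillCtx_perm (C : Ctx n) {t t' : CBT n}
    (h : (leavesCBT t).Perm (leavesCBT t')) :
    (leavesCBT (fillCtx C t)).Perm (leavesCBT (fillCtx C t')) := by
  induction C with
  | hole => exact h
  | nodeL c C r ih => exact ih.append_right _
  | nodeR c l C ih => exact ih.append_left _

theorem Multilinear.of_perm {C : Ctx n} {t t' : CBT n} (hT : Multilinear (fillCtx C t))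
    (h : (leavesCBT t).Perm (leavesCBT t')) : Multilinear (fillCtx C t') :=
  have hp := leavesCBT_fillCtx_perm C h
  ⟨hp.nodup_iff.1 hT.1, fun x => hp.mem_iff.1 (hT.2 x)⟩

theorem mem_leavesCBT_fillCtx (C : Ctx n) {t : CBT n} {x : Fin n} (hx : x ∈ leavesCBT t) :
    x ∈ leavesCBT (fillCtx C t) := by
  induction C <;> simp_all [fillCtx, leavesCBT]

theorem nodup_of_fillCtx {C : Ctx n} {t : CBT n} (h : (leavesCBT (fillCtx C t)).Nodup) :
    (leavesCBT t).Nodup := by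
  induction C with
  | hole => exact h
  | nodeL c C r ih => exact ih (List.nodup_append.1 h).1
  | nodeR c l C ih => exact ih (List.nodup_append.1 h).2.1

theorem leafPos_fillCtx_of_mem {C : Ctx n} {t : CBT n} {x : Fin n}
    (hnd : (leavesCBT (fillCtx C t)).Nodup) (hx : x ∈ leavesCBT t) :
    leafPos (fillCtx C t) x = ctxPos C ++ leafPos t x := by
  induction C with
  | hole => rfl
  | nodeL c C r ih =>
    rw [fillCtx, leafPos_node_of_mem_left (mem_leavesCBT_fillCtx C hx),
      ih (List.nodup_append.1 hnd).1]
    rfl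
  | nodeR c l C ih =>
    have hxC := mem_leavesCBT_fillCtx C hx
    rw [fillCtx, leafPos_node_of_mem_right ((notMem_of_nodup_node hnd).2 x hxC) hxC,
      ih hnd.of_append_right]
    rfl

theorem leafPos_fillCtx_of_notMem (C : Ctx n) {t t' : CBT n} {x : Fin n}
    (hx : x ∉ leavesCBT t) (hx' : x ∉ leavesCBT t') :
    leafPos (fillCtx C t') x = leafPos (fillCtx C t) x := by
  suffices posIn (fillCtx C t') x = posIn (fillCtx C t) x by rw [leafPos, leafPos, this]
  induction C with
  | hole => rw [fillCtx, fillCtx, posIn_eq_none_iff.2 hx, posIn_eq_none_iff.2 hx']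
  | nodeL c C r ih => simp only [fillCtx, posIn, ih]
  | nodeR c l C ih => simp only [fillCtx, posIn, ih]

theorem not_prefix_leafPos_fillCtx {C : Ctx n} {t : CBT n} {x : Fin n} (hx : x ∉ leavesCBT t)
    (hxT : x ∈ leavesCBT (fillCtx C t)) : ¬ ctxPos C <+: leafPos (fillCtx C t) x := by
  induction C with
  | hole => exact absurd hxT hx
  | nodeL c C r ih =>
    rw [fillCtx, mem_leavesCBT_node] at hxT
    by_cases hxC : x ∈ leavesCBT (fillCtx C t)
    · rw [fillCtx, leafPos_node_of_mem_left hxC, ctxPos, List.cons_prefix_cons]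
      exact fun h => ih hxC h.2
    · rw [fillCtx, leafPos_node_of_mem_right hxC (hxT.resolve_left hxC), ctxPos]
      simp
  | nodeR c l C ih =>
    rw [fillCtx, mem_leavesCBT_node] at hxT
    by_cases hxl : x ∈ leavesCBT l
    · rw [fillCtx, leafPos_node_of_mem_left hxl, ctxPos]
      simp
    · rw [fillCtx, leafPos_node_of_mem_right hxl (hxT.resolve_left hxl), ctxPos,
        List.cons_prefix_cons]
      exact fun h => ih (hxT.resolve_left hxl) h.2

theorem ctxPos_append_mem_internalPos (C : Ctx n) {t : CBT n} {q : List Bool}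
    (hq : q ∈ internalPos t) : ctxPos C ++ q ∈ internalPos (fillCtx C t) := by
  induction C <;> simp_all [ctxPos, fillCtx, internalPos]

theorem nodeColAt_fillCtx_ctxPos_append (C : Ctx n) (t : CBT n) (q : List Bool) :
    nodeColAt (fillCtx C t) (ctxPos C ++ q) = nodeColAt t q := by
  induction C <;> simp_all [ctxPos, fillCtx, nodeColAt]

theorem nodeColAt_fillCtx_of_not_prefix (C : Ctx n) (t t' : CBT n) {q : List Bool}
    (h : ¬ ctxPos C <+: q) : nodeColAt (fillCtx C t') q = nodeColAt (fillCtx C t) q := by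
  induction C generalizing q with
  | hole => exact absurd List.nil_prefix h
  | nodeL c C r ih =>
    rcases q with _ | ⟨_ | _, q⟩
    · rfl
    · exact ih (fun h' => h (List.cons_prefix_cons.2 ⟨rfl, h'⟩))
    · rfl
  | nodeR c l C ih =>
    rcases q with _ | ⟨_ | _, q⟩
    · rfl
    · rfl
    · exact ih (fun h' => h (List.cons_prefix_cons.2 ⟨rfl, h'⟩))

end Contexts

section Locality

variable {n : ℕ} {C : Ctx n} {t t' : CBT n} {i j : Fin n}

theorem nadir_fillCtx_of_mem (hnd : (leavesCBT (fillCtx C t)).Nodup) (hi : i ∈ leavesCBT t)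
    (hj : j ∈ leavesCBT t) : nadir (fillCtx C t) i j = ctxPos C ++ nadir t i j := by
  rw [nadir_eq_lcp, leafPos_fillCtx_of_mem hnd hi, leafPos_fillCtx_of_mem hnd hj, lcp_append,
    nadir_eq_lcp]

theorem ccw_fillCtx_iff_of_mem (hnd : (leavesCBT (fillCtx C t)).Nodup) (hi : i ∈ leavesCBT t)
    (hj : j ∈ leavesCBT t) : Ccw (fillCtx C t) i j ↔ Ccw t i j := by
  rw [ccw_iff_rightOf (mem_leavesCBT_fillCtx C hi) (mem_leavesCBT_fillCtx C hj),
    leafPos_fillCtx_of_mem hnd hi, leafPos_fillCtx_of_mem hnd hj, rightOf_append,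
    ccw_iff_rightOf hi hj]

theorem fillCtx_congr_of_notMem (hT : Multilinear (fillCtx C t))
    (hperm : (leavesCBT t).Perm (leavesCBT t')) (h : ¬ (i ∈ leavesCBT t ∧ j ∈ leavesCBT t)) :
    nadir (fillCtx C t') i j = nadir (fillCtx C t) i j ∧
      ¬ ctxPos C <+: nadir (fillCtx C t) i j ∧
      (Ccw (fillCtx C t') i j ↔ Ccw (fillCtx C t) i j) := by
  have hT' := hT.of_perm hperm
  have outside : ∀ x ∉ leavesCBT t, leafPos (fillCtx C t') x = leafPos (fillCtx C t) x ∧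
      ¬ ctxPos C <+: leafPos (fillCtx C t) x := fun x hx =>
    ⟨leafPos_fillCtx_of_notMem C hx (hx ∘ hperm.mem_iff.2),
      not_prefix_leafPos_fillCtx hx (hT.2 x)⟩
  have inside : ∀ x ∈ leavesCBT t, leafPos (fillCtx C t') x = ctxPos C ++ leafPos t' x ∧
      leafPos (fillCtx C t) x = ctxPos C ++ leafPos t x := fun x hx =>
    ⟨leafPos_fillCtx_of_mem hT'.1 (hperm.mem_iff.1 hx), leafPos_fillCtx_of_mem hT.1 hx⟩
  rw [nadir_eq_lcp, nadir_eq_lcp, ccw_iff_rightOf (hT'.2 i) (hT'.2 j),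
    ccw_iff_rightOf (hT.2 i) (hT.2 j)]
  by_cases hi : i ∈ leavesCBT t
  · obtain ⟨hj', hjs⟩ := outside j fun hj => h ⟨hi, hj⟩
    obtain ⟨hi', hi''⟩ := inside i hi
    rw [hj', hi', hi'', lcp_append_left_of_not_prefix hjs, lcp_append_left_of_not_prefix hjs,
      rightOf_append_left_iff hjs]
    exact ⟨rfl, fun hp => hjs (hp.trans (lcp_prefix_right _ _)), Iff.rfl⟩
  · obtain ⟨hi', his⟩ := outside i hi
    rw [hi']
    refine ⟨?_, fun hp => his (hp.trans (lcp_prefix_left _ _)), ?_⟩ <;>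
      by_cases hj : j ∈ leavesCBT t
    · rw [(inside j hj).1, (inside j hj).2, lcp_append_right_of_not_prefix his,
        lcp_append_right_of_not_prefix his]
    · rw [(outside j hj).1]
    · rw [(inside j hj).1, (inside j hj).2, rightOf_append_right_iff his]
    · rw [(outside j hj).1]

theorem mem_leavesCBT_of_prefix_nadir (hT : Multilinear (fillCtx C t))
    (h : ctxPos C <+: nadir (fillCtx C t) i j) : i ∈ leavesCBT t ∧ j ∈ leavesCBT t := by
  by_contra h'
  exact (fillCtx_congr_of_notMem hT (.refl _) h').2.1 h

end Locality

section Transport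

variable {n : ℕ}

theorem Multilinear.length_leavesCBT {T : CBT n} (hT : Multilinear T) :
    (leavesCBT T).length = n := by
  rw [← List.toFinset_card_of_nodup hT.1,
    Finset.eq_univ_iff_forall.2 fun x => List.mem_toFinset.2 (hT.2 x), Finset.card_univ,
    Fintype.card_fin]

theorem Multilinear.ncard_internalPos {T : CBT n} (hT : Multilinear T) :
    {q | q ∈ internalPos T}.ncard = n - 1 := by
  rw [← List.coe_toFinset, Set.ncard_coe_finset,
    List.toFinset_card_of_nodup (nodup_internalPos T)]
  have := length_internalPos T
  rw [hT.length_leavesCBT] at this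
  omega

-- Surjectivity comes for free: nadirs of distinct leaves are internal vertices, and there are
-- `n - 1` of these.
theorem isCPB_iff {G : OGraph n} {T : CBT n} (hT : Multilinear T) :
    IsCPB G T ↔
      Set.InjOn (fun e : Fin n × Fin n => nadir T e.1 e.2) {e | G.dir e.1 e.2 ≠ none} ∧
      {e : Fin n × Fin n | G.dir e.1 e.2 ≠ none}.ncard = n - 1 ∧
      ∀ i j : Fin n, G.dir i j ≠ none → nodeColAt T (nadir T i j) = G.dir i j := by
  constructor
  · rintro ⟨hbij, hcol⟩
    exact ⟨hbij.injOn, hbij.ncard_eq.trans hT.ncard_internalPos, hcol⟩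
  · rintro ⟨hinj, hcard, hcol⟩
    have hmaps : Set.MapsTo (fun e : Fin n × Fin n => nadir T e.1 e.2)
        {e | G.dir e.1 e.2 ≠ none} {q | q ∈ internalPos T} := fun e he =>
      nadir_mem_internalPos hT.1 (hT.2 _) (hT.2 _) fun h => he (h ▸ G.loopless e.2)
    refine ⟨⟨hmaps, hinj, ?_⟩, hcol⟩
    refine (Set.eq_of_subset_of_ncard_le hmaps.image_subset ?_
      (List.finite_toSet _)).symm.subset
    rw [hinj.ncard_image, hcard, hT.ncard_internalPos]

theorem isCPB_iff_of_nadir_eq {G : OGraph n} {T T' : CBT n} (hT : Multilinear T)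
    (hT' : Multilinear T') {Φ : List Bool → List Bool} (hΦ : Φ.Injective)
    (hnad : ∀ i j, G.dir i j ≠ none → nadir T' i j = Φ (nadir T i j))
    (hcol : ∀ q, nodeColAt T' (Φ q) = nodeColAt T q) : IsCPB G T' ↔ IsCPB G T := by
  rw [isCPB_iff hT, isCPB_iff hT']
  have hnad_eq : ∀ e ∈ {e : Fin n × Fin n | G.dir e.1 e.2 ≠ none},
      ∀ e' ∈ {e : Fin n × Fin n | G.dir e.1 e.2 ≠ none},
      nadir T' e.1 e.2 = nadir T' e'.1 e'.2 ↔ nadir T e.1 e.2 = nadir T e'.1 e'.2 :=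
    fun e he e' he' => by rw [hnad _ _ he, hnad _ _ he', hΦ.eq_iff]
  refine and_congr ⟨fun h e he e' he' hee => h he he' ((hnad_eq e he e' he').2 hee),
    fun h e he e' he' hee => h he he' ((hnad_eq e he e' he').1 hee)⟩ (and_congr Iff.rfl ?_)
  exact forall₂_congr fun i j => forall_congr' fun h => by rw [hnad i j h, hcol]

theorem tauGT_eq_prod (G : OGraph n) (T : CBT n) :
    tauGT R G T =
      ∏ e : Fin n × Fin n, if G.dir e.1 e.2 ≠ none ∧ Ccw T e.1 e.2 then -1 else 1 := by
  rw [tauGT, Finset.prod_ite, Finset.prod_const, Finset.prod_const_one, mul_one]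

theorem tauGT_eq_neg_of_ccw {G : OGraph n} {T T' : CBT n} {e₀ : Fin n × Fin n}
    (he₀ : G.dir e₀.1 e₀.2 ≠ none)
    (h : ∀ e : Fin n × Fin n, G.dir e.1 e.2 ≠ none →
      ((Ccw T' e.1 e.2 ↔ Ccw T e.1 e.2) ↔ e ≠ e₀)) :
    tauGT R G T' = - tauGT R G T := by
  rw [tauGT_eq_prod, tauGT_eq_prod, ← Finset.mul_prod_erase _ _ (Finset.mem_univ e₀),
    ← Finset.mul_prod_erase _ _ (Finset.mem_univ e₀)]
  have hrest : ∀ e ∈ Finset.univ.erase e₀,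
      (if G.dir e.1 e.2 ≠ none ∧ Ccw T' e.1 e.2 then (-1 : R) else 1) =
        if G.dir e.1 e.2 ≠ none ∧ Ccw T e.1 e.2 then -1 else 1 := by
    intro e he
    by_cases hd : G.dir e.1 e.2 ≠ none
    · rw [(h e hd).2 (Finset.ne_of_mem_erase he)]
    · simp only [hd, false_and, if_false]
  have h₀ : ¬ (Ccw T' e₀.1 e₀.2 ↔ Ccw T e₀.1 e₀.2) := fun h' => (h e₀ he₀).1 h' rfl
  rw [Finset.prod_congr rfl hrest]
  by_cases hc : Ccw T e₀.1 e₀.2 <;> simp_all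

end Transport

section SubtreeReplacement

variable {n : ℕ} {G : OGraph n} {C : Ctx n} {t t' : CBT n}

theorem isCPB_fillCtx_iff (f : List Bool → List Bool) (hf : f.Injective)
    (hT : Multilinear (fillCtx C t)) (hperm : (leavesCBT t).Perm (leavesCBT t'))
    (hcol : ∀ q, nodeColAt t' (f q) = nodeColAt t q)
    (hnad : ∀ i j, G.dir i j ≠ none → i ∈ leavesCBT t → j ∈ leavesCBT t →
      nadir t' i j = f (nadir t i j)) :
    IsCPB G (fillCtx C t') ↔ IsCPB G (fillCtx C t) := by
  have hT' := hT.of_perm hperm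
  refine isCPB_iff_of_nadir_eq hT hT' (liftAt_injective (ctxPos C) hf) (fun i j hij => ?_)
    fun q => ?_
  · by_cases h : i ∈ leavesCBT t ∧ j ∈ leavesCBT t
    · rw [nadir_fillCtx_of_mem hT.1 h.1 h.2, liftAt_append,
        nadir_fillCtx_of_mem hT'.1 (hperm.mem_iff.1 h.1) (hperm.mem_iff.1 h.2),
        hnad i j hij h.1 h.2]
    · obtain ⟨hnad', hpre, -⟩ := fillCtx_congr_of_notMem hT hperm h
      rw [hnad', liftAt_of_not_prefix f hpre]
  · by_cases hq : ctxPos C <+: q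
    · obtain ⟨r, rfl⟩ := hq
      rw [liftAt_append, nodeColAt_fillCtx_ctxPos_append, nodeColAt_fillCtx_ctxPos_append, hcol]
    · rw [liftAt_of_not_prefix f hq, nodeColAt_fillCtx_of_not_prefix C t t' hq]

theorem tauGT_fillCtx_eq_neg (hT : Multilinear (fillCtx C t))
    (hperm : (leavesCBT t).Perm (leavesCBT t')) (hG : IsCPB G (fillCtx C t))
    {q₀ : List Bool} (hq₀ : q₀ ∈ internalPos t)
    (hccw : ∀ i j, G.dir i j ≠ none → i ∈ leavesCBT t → j ∈ leavesCBT t →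
      ((Ccw t' i j ↔ Ccw t i j) ↔ nadir t i j ≠ q₀)) :
    tauGT R G (fillCtx C t') = - tauGT R G (fillCtx C t) := by
  obtain ⟨e₀, he₀, hnad₀⟩ := hG.1.2.2 (ctxPos_append_mem_internalPos C hq₀)
  simp only at hnad₀
  have hinside₀ := mem_leavesCBT_of_prefix_nadir hT (hnad₀ ▸ List.prefix_append _ _)
  refine tauGT_eq_neg_of_ccw R he₀ fun e he => ?_
  by_cases hinside : e.1 ∈ leavesCBT t ∧ e.2 ∈ leavesCBT t
  · have hT' := hT.of_perm hperm
    rw [ccw_fillCtx_iff_of_mem hT'.1 (hperm.mem_iff.1 hinside.1) (hperm.mem_iff.1 hinside.2),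
      ccw_fillCtx_iff_of_mem hT.1 hinside.1 hinside.2, hccw _ _ he hinside.1 hinside.2]
    refine not_congr ⟨fun hq => hG.1.2.1 he he₀ ?_, fun he' => ?_⟩
    · simp only
      rw [hnad₀, nadir_fillCtx_of_mem hT.1 hinside.1 hinside.2, hq]
    · subst he'
      simpa [nadir_fillCtx_of_mem hT.1 hinside.1 hinside.2] using hnad₀
  · rw [(fillCtx_congr_of_notMem hT hperm hinside).2.2]
    simp only [true_iff]
    rintro rfl
    exact hinside hinside₀

theorem pairGT_fillCtx_eq_neg (f : List Bool → List Bool) (hf : f.Injective)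
    (hT : Multilinear (fillCtx C t)) (hperm : (leavesCBT t).Perm (leavesCBT t'))
    (hcol : ∀ q, nodeColAt t' (f q) = nodeColAt t q) {q₀ : List Bool}
    (hq₀ : q₀ ∈ internalPos t)
    (hloc : ∀ i j, G.dir i j ≠ none → i ∈ leavesCBT t → j ∈ leavesCBT t →
      nadir t' i j = f (nadir t i j) ∧ ((Ccw t' i j ↔ Ccw t i j) ↔ nadir t i j ≠ q₀)) :
    pairGT R G (fillCtx C t') = - pairGT R G (fillCtx C t) := by
  have hiff := isCPB_fillCtx_iff f hf hT hperm hcol fun i j h hi hj => (hloc i j h hi hj).1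
  by_cases hG : IsCPB G (fillCtx C t)
  · rw [pairGT, if_pos (hiff.2 hG), pairGT, if_pos hG,
      tauGT_fillCtx_eq_neg R hT hperm hG hq₀ fun i j h hi hj => (hloc i j h hi hj).2]
  · rw [pairGT, if_neg (mt hiff.1 hG), pairGT, if_neg hG, neg_zero]

end SubtreeReplacement

section SwapAndRotation

variable {n : ℕ} {G : OGraph n} {C : Ctx n}

def swapPos : List Bool → List Bool
  | [] => []
  | b :: p => (!b) :: p

theorem swapPos_injective : swapPos.Injective :=
  Function.Involutive.injective fun q => by cases q <;> simp [swapPos]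

theorem pairGT_swap {c : Col} {a b : CBT n} (hT : Multilinear (fillCtx C (.node c a b))) :
    pairGT R G (fillCtx C (.node c b a)) = - pairGT R G (fillCtx C (.node c a b)) := by
  obtain ⟨hab, hba⟩ := notMem_of_nodup_node (nodup_of_fillCtx hT.1)
  refine pairGT_fillCtx_eq_neg R swapPos swapPos_injective hT List.perm_append_comm
    (fun q => by rcases q with _ | ⟨_ | _, q⟩ <;> rfl) (q₀ := []) (by simp [internalPos])
    fun i j _ hi hj => ?_
  rw [mem_leavesCBT_node] at hi hj
  rcases hi with hi | hi <;> rcases hj with hj | hj <;>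
    simp [nadir_eq_lcp, ccw_iff_rightOf, mem_leavesCBT_node, leafPos_node_of_mem_left,
      leafPos_node_of_mem_right, swapPos, hi, hj, hab, hba]

-- Where the vertex at position `q` of `c₁ X (c₂ Y Z)` sits in `c₂ Z (c₁ X Y)`.
def rotPos : List Bool → List Bool
  | [] => [true]
  | [true] => []
  | false :: p => true :: false :: p
  | true :: false :: p => true :: true :: p
  | true :: true :: p => false :: p

theorem rotPos_injective : rotPos.Injective := by
  intro q₁ q₂ h
  rcases q₁ with _ | ⟨_ | _, _ | ⟨_ | _, p⟩⟩ <;>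
    rcases q₂ with _ | ⟨_ | _, _ | ⟨_ | _, q⟩⟩ <;> simp_all [rotPos]

def HasEdgeBetween (G : OGraph n) (X Z : CBT n) : Prop :=
  ∃ i j, G.dir i j ≠ none ∧
    (i ∈ leavesCBT X ∧ j ∈ leavesCBT Z ∨ i ∈ leavesCBT Z ∧ j ∈ leavesCBT X)

theorem hasEdgeBetween_comm {X Z : CBT n} : HasEdgeBetween G X Z ↔ HasEdgeBetween G Z X := by
  simp only [HasEdgeBetween, or_comm]

theorem pairGT_rotate {c₁ c₂ : Col} {X Y Z : CBT n}
    (hT : Multilinear (fillCtx C (.node c₁ X (.node c₂ Y Z)))) (hXZ : ¬ HasEdgeBetween G X Z) :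
    pairGT R G (fillCtx C (.node c₂ Z (.node c₁ X Y))) =
      - pairGT R G (fillCtx C (.node c₁ X (.node c₂ Y Z))) := by
  obtain ⟨hX, hY, hZ⟩ := notMem_of_nodup_node_node (nodup_of_fillCtx hT.1)
  have hperm : (leavesCBT (.node c₁ X (.node c₂ Y Z))).Perm
      (leavesCBT (.node c₂ Z (.node c₁ X Y))) := by
    simpa only [leavesCBT, List.append_assoc] using
      List.perm_append_comm (l₁ := leavesCBT X ++ leavesCBT Y) (l₂ := leavesCBT Z)
  refine pairGT_fillCtx_eq_neg R rotPos rotPos_injective hT hperm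
    (fun q => by rcases q with _ | ⟨_ | _, _ | ⟨_ | _, q⟩⟩ <;> rfl) (q₀ := [true])
    (by simp [internalPos]) fun i j hij hi hj => ?_
  simp only [mem_leavesCBT_node] at hi hj
  rcases hi with hi | hi | hi <;> rcases hj with hj | hj | hj
  all_goals first
    | exact absurd ⟨i, j, hij, by tauto⟩ hXZ
    | simp [nadir_eq_lcp, ccw_iff_rightOf, mem_leavesCBT_node, leafPos_node_of_mem_left,
        leafPos_node_of_mem_right, rotPos, hi, hj, hX, hY, hZ]

end SwapAndRotation

section Vanishing

variable {n : ℕ} {G : OGraph n} {C : Ctx n}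

theorem nadir_node_eq_nil_iff {c : Col} {l r : CBT n} {i j : Fin n}
    (hnd : (leavesCBT (.node c l r)).Nodup) (hi : i ∈ leavesCBT (.node c l r))
    (hj : j ∈ leavesCBT (.node c l r)) :
    nadir (.node c l r) i j = [] ↔
      i ∈ leavesCBT l ∧ j ∈ leavesCBT r ∨ i ∈ leavesCBT r ∧ j ∈ leavesCBT l := by
  obtain ⟨hl, hr⟩ := notMem_of_nodup_node hnd
  rw [mem_leavesCBT_node] at hi hj
  rcases hi with hi | hi <;> rcases hj with hj | hj <;>
    simp [nadir_eq_lcp, leafPos_node_of_mem_left, leafPos_node_of_mem_right, hi, hj, hl, hr]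

theorem nadir_fillCtx_node_eq_ctxPos_iff {c : Col} {l r : CBT n} {i j : Fin n}
    (hT : Multilinear (fillCtx C (.node c l r))) :
    nadir (fillCtx C (.node c l r)) i j = ctxPos C ↔
      i ∈ leavesCBT l ∧ j ∈ leavesCBT r ∨ i ∈ leavesCBT r ∧ j ∈ leavesCBT l := by
  by_cases h : i ∈ leavesCBT (.node c l r) ∧ j ∈ leavesCBT (.node c l r)
  · rw [nadir_fillCtx_of_mem hT.1 h.1 h.2, List.append_right_eq_self,
      nadir_node_eq_nil_iff (nodup_of_fillCtx hT.1) h.1 h.2]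
  · refine ⟨fun he => (h (mem_leavesCBT_of_prefix_nadir hT (he ▸ List.prefix_refl _))).elim,
      ?_⟩
    rintro (⟨hi, hj⟩ | ⟨hi, hj⟩) <;> simp_all [mem_leavesCBT_node]

theorem IsCPB.hasEdgeBetween {c : Col} {l r : CBT n} (hT : Multilinear (fillCtx C (.node c l r)))
    (hG : IsCPB G (fillCtx C (.node c l r))) : HasEdgeBetween G l r := by
  obtain ⟨e, he, hnad⟩ := hG.1.2.2
    (ctxPos_append_mem_internalPos C (q := []) (by simp [internalPos]))
  rw [List.append_nil] at hnad
  exact ⟨e.1, e.2, he, (nadir_fillCtx_node_eq_ctxPos_iff hT).1 hnad⟩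

theorem pairGT_eq_zero_of_not_hasEdgeBetween {c₁ c₂ : Col} {X Y Z : CBT n}
    (hT : Multilinear (fillCtx C (.node c₁ X (.node c₂ Y Z)))) (hYZ : ¬ HasEdgeBetween G Y Z) :
    pairGT R G (fillCtx C (.node c₁ X (.node c₂ Y Z))) = 0 := by
  have hfill : fillCtx C (.node c₁ X (.node c₂ Y Z)) =
      fillCtx (compCtx C (.nodeR c₁ X .hole)) (.node c₂ Y Z) := by
    rw [fillCtx_compCtx]; rfl
  rw [hfill] at hT ⊢
  -- No edge could have the root of `Y Z` as nadir.
  exact if_neg fun hG => hYZ (hG.hasEdgeBetween hT)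

theorem pairGT_eq_zero_of_hasEdgeBetween {c₁ c₂ : Col} {X Y Z : CBT n}
    (hT : Multilinear (fillCtx C (.node c₁ X (.node c₂ Y Z)))) (hXY : HasEdgeBetween G X Y)
    (hXZ : HasEdgeBetween G X Z) : pairGT R G (fillCtx C (.node c₁ X (.node c₂ Y Z))) = 0 := by
  refine if_neg fun hG => ?_
  obtain ⟨hX, hY, hZ⟩ := notMem_of_nodup_node_node (nodup_of_fillCtx hT.1)
  obtain ⟨i, j, hij, hXY⟩ := hXY
  obtain ⟨k, l, hkl, hXZ⟩ := hXZ
  -- Both edges have the root of `X (Y Z)` as nadir.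
  have hsame : (i, j) = (k, l) := hG.1.2.1 hij hkl <| by
    simp only
    rw [(nadir_fillCtx_node_eq_ctxPos_iff hT).2 (by simp only [mem_leavesCBT_node]; tauto),
      (nadir_fillCtx_node_eq_ctxPos_iff hT).2 (by simp only [mem_leavesCBT_node]; tauto)]
  obtain ⟨rfl, rfl⟩ := Prod.mk.inj hsame
  rcases hXY with ⟨hi, hj⟩ | ⟨hi, hj⟩ <;> rcases hXZ with ⟨hi', hj'⟩ | ⟨hi', hj'⟩
  · exact (hY j hj).2 hj'
  · exact (hX i hi).2 hi'
  · exact (hX j hj).2 hj'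
  · exact (hY i hi).2 hi'

end Vanishing

section Relations

variable {n : ℕ} {G : OGraph n} {C : Ctx n}

theorem Multilinear.rotate {c₁ c₂ : Col} {X Y Z : CBT n}
    (hT : Multilinear (fillCtx C (.node c₁ X (.node c₂ Y Z)))) (d₁ d₂ : Col) :
    Multilinear (fillCtx C (.node d₁ Y (.node d₂ Z X))) :=
  hT.of_perm <| by
    simpa only [leavesCBT, List.append_assoc] using
      List.perm_append_comm (l₁ := leavesCBT X) (l₂ := leavesCBT Y ++ leavesCBT Z)

theorem pairGT_rotations_eq_zero {c₁ c₂ : Col} {X Y Z : CBT n}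
    (hT : Multilinear (fillCtx C (.node c₁ X (.node c₂ Y Z)))) (hXZ : ¬ HasEdgeBetween G X Z)
    (d₁ d₂ : Col) :
    pairGT R G (fillCtx C (.node c₁ X (.node c₂ Y Z))) +
      pairGT R G (fillCtx C (.node d₁ Y (.node d₂ Z X))) +
      pairGT R G (fillCtx C (.node c₂ Z (.node c₁ X Y))) = 0 := by
  rw [pairGT_rotate R hT hXZ, pairGT_eq_zero_of_not_hasEdgeBetween R (hT.rotate d₁ d₂)
    (mt hasEdgeBetween_comm.1 hXZ)]
  ring

theorem pairGT_jacobi {c : Col} {A B D : CBT n}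
    (hT : Multilinear (fillCtx C (.node c A (.node c B D)))) :
    pairGT R G (fillCtx C (.node c A (.node c B D))) +
      pairGT R G (fillCtx C (.node c B (.node c D A))) +
      pairGT R G (fillCtx C (.node c D (.node c A B))) = 0 := by
  have hT₂ := hT.rotate c c
  have hT₃ := hT₂.rotate c c
  by_cases hAD : HasEdgeBetween G A D
  · by_cases hBA : HasEdgeBetween G B A
    · by_cases hDB : HasEdgeBetween G D B
      · rw [pairGT_eq_zero_of_hasEdgeBetween R hT (hasEdgeBetween_comm.1 hBA) hAD,
          pairGT_eq_zero_of_hasEdgeBetween R hT₂ (hasEdgeBetween_comm.1 hDB) hBA,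
          pairGT_eq_zero_of_hasEdgeBetween R hT₃ (hasEdgeBetween_comm.1 hAD) hDB]
        ring
      · linear_combination pairGT_rotations_eq_zero R hT₃ hDB c c
    · linear_combination pairGT_rotations_eq_zero R hT₂ hBA c c
  · exact pairGT_rotations_eq_zero R hT hAD c c

theorem pairGT_mixed_jacobi {A B D : CBT n}
    (hT : Multilinear (fillCtx C (.node .red A (.node .blue B D)))) :
    pairGT R G (fillCtx C (.node .red A (.node .blue B D))) +
      pairGT R G (fillCtx C (.node .red B (.node .blue D A))) +
      pairGT R G (fillCtx C (.node .red D (.node .blue A B))) +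
      pairGT R G (fillCtx C (.node .blue A (.node .red B D))) +
      pairGT R G (fillCtx C (.node .blue B (.node .red D A))) +
      pairGT R G (fillCtx C (.node .blue D (.node .red A B))) = 0 := by
  have hT' : Multilinear (fillCtx C (.node .blue A (.node .red B D))) := hT.of_perm (.refl _)
  have hT₂ := hT.rotate .red .blue
  have hT₃ := hT₂.rotate .red .blue
  have hT₂' := hT.rotate .blue .red
  have hT₃' := hT₂.rotate .blue .red
  by_cases hAD : HasEdgeBetween G A D
  · by_cases hBA : HasEdgeBetween G B A
    · by_cases hDB : HasEdgeBetween G D B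
      · have hAB := hasEdgeBetween_comm.1 hBA
        have hBD := hasEdgeBetween_comm.1 hDB
        have hDA := hasEdgeBetween_comm.1 hAD
        rw [pairGT_eq_zero_of_hasEdgeBetween R hT hAB hAD,
          pairGT_eq_zero_of_hasEdgeBetween R hT₂ hBD hBA,
          pairGT_eq_zero_of_hasEdgeBetween R hT₃ hDA hDB,
          pairGT_eq_zero_of_hasEdgeBetween R hT' hAB hAD,
          pairGT_eq_zero_of_hasEdgeBetween R hT₂' hBD hBA,
          pairGT_eq_zero_of_hasEdgeBetween R hT₃' hDA hDB]
        ring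
      · linear_combination pairGT_rotations_eq_zero R hT₃ hDB .red .blue +
          pairGT_rotations_eq_zero R hT₃' hDB .blue .red
    · linear_combination pairGT_rotations_eq_zero R hT₂ hBA .red .blue +
        pairGT_rotations_eq_zero R hT₂' hBA .blue .red
  · linear_combination pairGT_rotations_eq_zero R hT hAD .red .blue +
      pairGT_rotations_eq_zero R hT' hAD .blue .red

end Relations

theorem pairing_eq_sum {n : ℕ} (β : Gamma R n) (α : Theta R n) :
    pairing R β α =
      β.sum fun G b => b * Finsupp.linearCombination R (fun T : BT n => pairGT R G T.1) α := by
  simp only [pairing, Finsupp.linearCombination_apply, Finsupp.mul_sum, smul_eq_mul, mul_assoc]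

theorem linearCombination_pairGT_eq_zero {n : ℕ} (G : OGraph n) {α : Theta R n}
    (hα : α ∈ Jn R n) :
    Finsupp.linearCombination R (fun T : BT n => pairGT R G T.1) α = 0 := by
  refine (Submodule.span_le (p := LinearMap.ker _)).2 ?_ hα
  rintro x ((⟨T₁, T₂, C, c, a, b, h₁, h₂, rfl⟩ |
    ⟨T₁, T₂, T₃, C, c, A, B, D, h₁, h₂, h₃, rfl⟩) |
    ⟨T₁, T₂, T₃, T₄, T₅, T₆, C, A, B, D, h₁, h₂, h₃, h₄, h₅, h₆, rfl⟩)
  · simp [h₁, h₂, pairGT_swap R (h₁ ▸ T₁.2)]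
  · simpa [h₁, h₂, h₃] using pairGT_jacobi R (h₁ ▸ T₁.2)
  · simpa [h₁, h₂, h₃, h₄, h₅, h₆] using pairGT_mixed_jacobi R (h₁ ▸ T₁.2)

theorem stmt9 (n : ℕ) (β : Gamma R n) (α : Theta R n) (hα : α ∈ Jn R n) :
    pairing R β α = 0 := by
  rw [pairing_eq_sum]
  exact Finset.sum_eq_zero fun G _ => by
    simp only [linearCombination_pairGT_eq_zero R G hα, mul_zero]

end LiuPaper
end
end
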